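/- arXiv:1001.5090 — 7 statements merged into one kernel-verified Lean document; each statement's English description precedes it below -/
import Mathlib

section
/- With M as above and 0 < δ ≤ 1/10, suppose θ ∈ R^{4m+2} satisfies |θ_i − 1/2| ≤ δ for all i, θ_{4j+1}+θ_{4j+2}+θ_{4j+3}+θ_{4j+4} = 2 for j = 0,...,m−1, and θ_{4m+1}+θ_{4m+2} = 1. Then for every interval S = [e_k, e_{k+j}] = {f_i : 2k−1 ≤ i ≤ 2k+2j−1} in M we have Σ_{f_i ∈ S} θ_i ≤ rank(S) − 1/2 + 3δ, where rank(S) = j+1 is the dimension of the span of S. -/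
open Finset

noncomputable def nbM (m : ℕ) (i : Fin (4*m+2)) : Fin (2*m+1) → ℝ :=
  if i.val = 4*m+1 then fun t => (-1 : ℝ) ^ (t : ℕ)
  else if i.val % 2 = 0 then
    fun t => if t.val = i.val / 2 then 1 else 0
  else
    fun t => if t.val = i.val / 2 then 1 else if t.val = i.val / 2 + 1 then -1 else 0

/-- for `θ ∈ P_δ` with `0 < δ ≤ 1/10`, the `θ`-sum over any interval
`S = [e_k, e_{k+j}]` (here `k = k'+1`, 1-based) is at most `rank S - 1/2 + 3δ = (j+1) - 1/2 + 3δ`. -/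
theorem stmt3 (m : ℕ) (δ : ℝ) (hδ0 : 0 < δ) (hδ : δ ≤ 1/10)
    (θ : Fin (4*m+2) → ℝ)
    (hnear : ∀ i, |θ i - 1/2| ≤ δ)
    (hblock : ∀ (j : ℕ) (hj : j < m), θ ⟨4*j, by omega⟩ + θ ⟨4*j+1, by omega⟩ + θ ⟨4*j+2, by omega⟩
        + θ ⟨4*j+3, by omega⟩ = 2)
    (hlast : θ ⟨4*m, by omega⟩ + θ ⟨4*m+1, by omega⟩ = 1)
    (k' j : ℕ) (h : k' + j ≤ 2*m) :
    ∑ i ∈ univ.filter (fun i : Fin (4*m+2) => 2*k' ≤ i.val ∧ i.val ≤ 2*k' + 2*j), θ i ≤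
      (Module.finrank ℝ (Submodule.span ℝ
        (nbM m '' {i : Fin (4*m+2) | 2*k' ≤ i.val ∧ i.val ≤ 2*k' + 2*j})) : ℝ)
        - 1/2 + 3*δ := by
  classical
  have hub : ∀ i, θ i ≤ 1/2 + δ := fun i => by
    have := abs_le.1 (hnear i); linarith [this.2]
  have hlb : ∀ i, 1/2 - δ ≤ θ i := fun i => by
    have := abs_le.1 (hnear i); linarith [this.1]
  -- Rank computation
  have hrank : Module.finrank ℝ (Submodule.span ℝ
      (nbM m '' {i : Fin (4*m+2) | 2*k' ≤ i.val ∧ i.val ≤ 2*k' + 2*j})) = j + 1 := by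
    set g : Fin (j+1) → Fin (2*m+1) := fun i => ⟨k' + i.val, by have := i.isLt; omega⟩ with hg
    set bvec : Fin (j+1) → (Fin (2*m+1) → ℝ) := fun i => Pi.single (g i) 1 with hbvec
    have hginj : Function.Injective g := by
      intro x y hxy
      have : k' + x.val = k' + y.val := congrArg Fin.val hxy
      exact Fin.ext (by omega)
    have hli : LinearIndependent ℝ bvec := by
      have h2 := (Pi.basisFun ℝ (Fin (2*m+1))).linearIndependent.comp g hginj
      have : (⇑(Pi.basisFun ℝ (Fin (2*m+1))) ∘ g) = bvec := by
        funext i; simp [hbvec]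
      rwa [this] at h2
    have hspan : Submodule.span ℝ (nbM m '' {i : Fin (4*m+2) | 2*k' ≤ i.val ∧ i.val ≤ 2*k' + 2*j})
        = Submodule.span ℝ (Set.range bvec) := by
      apply le_antisymm
      · rw [Submodule.span_le]
        rintro v ⟨i, hi, rfl⟩
        obtain ⟨h1, h2⟩ := hi
        have hne : i.val ≠ 4*m+1 := by omega
        by_cases hpar : i.val % 2 = 0
        · have : nbM m i = bvec ⟨i.val/2 - k', by omega⟩ := by
            unfold nbM
            rw [if_neg hne, if_pos hpar]
            funext t
            simp only [hbvec, hg, Pi.single_apply, Fin.ext_iff]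
            rw [show k' + (i.val / 2 - k') = i.val / 2 by omega]
          rw [this]
          exact Submodule.subset_span ⟨_, rfl⟩
        · have : nbM m i = bvec ⟨i.val/2 - k', by omega⟩ - bvec ⟨i.val/2 + 1 - k', by omega⟩ := by
            unfold nbM
            rw [if_neg hne, if_neg hpar]
            funext t
            simp only [hbvec, hg, Pi.single_apply, Fin.ext_iff, Pi.sub_apply]
            rw [show k' + (i.val / 2 - k') = i.val / 2 by omega,
              show k' + (i.val / 2 + 1 - k') = i.val / 2 + 1 by omega]
            by_cases e1 : t.val = i.val / 2 <;> by_cases e2 : t.val = i.val / 2 + 1 <;>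
              simp [e1, e2] <;> omega
          rw [this]
          exact Submodule.sub_mem _ (Submodule.subset_span ⟨_, rfl⟩)
            (Submodule.subset_span ⟨_, rfl⟩)
      · rw [Submodule.span_le]
        rintro v ⟨t, rfl⟩
        have ht := t.isLt
        refine Submodule.subset_span ⟨⟨2*(k'+t.val), by omega⟩,
          ⟨by show 2*k' ≤ 2*(k'+t.val); omega, by show 2*(k'+t.val) ≤ 2*k' + 2*j; omega⟩, ?_⟩
        unfold nbM
        rw [if_neg (by show ¬ (2*(k'+t.val)) = 4*m+1; omega),
          if_pos (by show (2*(k'+t.val)) % 2 = 0; omega)]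
        funext x
        simp only [hbvec, hg, Pi.single_apply, Fin.ext_iff]
        rw [show 2*(k'+t.val)/2 = k' + t.val by omega]
    rw [hspan, finrank_span_eq_card hli, Fintype.card_fin]
  rw [hrank]
  -- Sum computation
  set θ' : ℕ → ℝ := fun n => if hn : n < 4*m+2 then θ ⟨n, hn⟩ else 0 with hθ'
  have hθ'eq : ∀ (n : ℕ) (hn : n < 4*m+2), θ' n = θ ⟨n, hn⟩ := fun n hn => dif_pos hn
  set T : ℕ → ℝ := fun n => ∑ i ∈ Finset.range n, θ' i with hT
  have hsum : ∑ i ∈ univ.filter (fun i : Fin (4*m+2) => 2*k' ≤ i.val ∧ i.val ≤ 2*k' + 2*j), θ i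
      = ∑ n ∈ Finset.Icc (2*k') (2*k'+2*j), θ' n := by
    have e0 : ∑ i ∈ univ.filter (fun i : Fin (4*m+2) => 2*k' ≤ i.val ∧ i.val ≤ 2*k' + 2*j), θ i
        = ∑ i : Fin (4*m+2),
            (fun n : ℕ => if 2*k' ≤ n ∧ n ≤ 2*k'+2*j then θ' n else 0) i.val := by
      rw [Finset.sum_filter]
      refine Finset.sum_congr rfl fun i _ => ?_
      simp only [hθ'eq _ i.isLt, Fin.eta]
    rw [e0, Fin.sum_univ_eq_sum_range
      (fun n : ℕ => if 2*k' ≤ n ∧ n ≤ 2*k'+2*j then θ' n else 0) (4*m+2), ← Finset.sum_filter]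
    congr 1
    ext n
    simp only [Finset.mem_filter, Finset.mem_range, Finset.mem_Icc]
    omega
  have hT4 : ∀ t, t ≤ m → T (4*t) = 2*t := by
    intro t
    induction t with
    | zero => intro _; simp [hT]
    | succ t ih =>
      intro ht
      have ht' : t ≤ m := by omega
      have e : 4*(t+1) = (4*t+3)+1 := by ring
      have e3 : 4*t+3 = (4*t+2)+1 := rfl
      have e2 : 4*t+2 = (4*t+1)+1 := rfl
      have e1 : 4*t+1 = (4*t)+1 := rfl
      have hT' : T (4*(t+1)) = T (4*t) + θ' (4*t) + θ' (4*t+1) + θ' (4*t+2) + θ' (4*t+3) := by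
        simp only [hT, e, Finset.sum_range_succ, e3, e2, e1]
        try ring
      have htm : t < m := by omega
      rw [hT', ih ht', hθ'eq _ (by omega), hθ'eq _ (by omega), hθ'eq _ (by omega),
        hθ'eq _ (by omega)]
      have hb := hblock t htm
      push_cast
      linarith [hb]
  have hTodd : ∀ n, n % 2 = 1 → n ≤ 4*m+1 → T n ≤ (n:ℝ)/2 + δ := by
    intro n hodd hle
    rcases Nat.even_or_odd (n / 2) with he | ho
    · obtain ⟨t, ht⟩ := he
      have hn : n = 4*t+1 := by omega
      have htm : t ≤ m := by omega
      have hTn : T n = T (4*t) + θ' (4*t) := by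
        simp only [hT, hn, Finset.sum_range_succ]
      rw [hTn, hT4 t htm, hθ'eq _ (by omega)]
      have h1 := hub ⟨4*t, by omega⟩
      have hc : ((n:ℝ)) = 4*(t:ℝ)+1 := by rw [hn]; push_cast; try ring
      rw [hc]
      linarith
    · obtain ⟨t, ht⟩ := ho
      have hn : n = 4*t+3 := by omega
      have htm : t < m := by omega
      have e3 : 4*t+3 = (4*t+2)+1 := rfl
      have e2 : 4*t+2 = (4*t+1)+1 := rfl
      have e1 : 4*t+1 = (4*t)+1 := rfl
      have hTn : T n = T (4*t) + θ' (4*t) + θ' (4*t+1) + θ' (4*t+2) := by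
        simp only [hT, hn, e3, e2, e1, Finset.sum_range_succ]
        try ring
      rw [hTn, hT4 t (by omega), hθ'eq _ (by omega), hθ'eq _ (by omega), hθ'eq _ (by omega)]
      have hb := hblock t htm
      have h1 := hlb ⟨4*t+3, by omega⟩
      have hc : ((n:ℝ)) = 4*(t:ℝ)+3 := by rw [hn]; push_cast; try ring
      rw [hc]
      linarith
  have hTeven : ∀ n, n % 2 = 0 → n ≤ 4*m+1 → (n:ℝ)/2 - 2*δ ≤ T n := by
    intro n heven hle
    rcases Nat.even_or_odd (n / 2) with he | ho
    · obtain ⟨t, ht⟩ := he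
      have hn : n = 4*t := by omega
      have htm : t ≤ m := by omega
      rw [hn, hT4 t htm]
      push_cast
      linarith
    · obtain ⟨t, ht⟩ := ho
      have hn : n = 4*t+2 := by omega
      have e2 : 4*t+2 = (4*t+1)+1 := rfl
      have e1 : 4*t+1 = (4*t)+1 := rfl
      have hTn : T n = T (4*t) + θ' (4*t) + θ' (4*t+1) := by
        simp only [hT, hn, e2, e1, Finset.sum_range_succ]
        try ring
      rw [hTn, hT4 t (by omega), hθ'eq _ (by omega), hθ'eq _ (by omega)]
      have h1 := hlb ⟨4*t, by omega⟩
      have h2 := hlb ⟨4*t+1, by omega⟩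
      have hc : ((n:ℝ)) = 4*(t:ℝ)+2 := by rw [hn]; push_cast; try ring
      rw [hc]
      linarith
  have hIcc : ∑ n ∈ Finset.Icc (2*k') (2*k'+2*j), θ' n = T (2*k'+2*j+1) - T (2*k') := by
    rw [show Finset.Icc (2*k') (2*k'+2*j) = Finset.Ico (2*k') (2*k'+2*j+1) by
      ext n; simp only [Finset.mem_Icc, Finset.mem_Ico]; omega]
    exact Finset.sum_Ico_eq_sub θ' (by omega)
  have hO := hTodd (2*k'+2*j+1) (by omega) (by omega)
  have hE := hTeven (2*k') (by omega) (by omega)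
  rw [hsum, hIcc]
  have c1 : ((2*k'+2*j+1 : ℕ) : ℝ) = 2*(k':ℝ)+2*(j:ℝ)+1 := by push_cast; try ring
  have c2 : ((2*k' : ℕ) : ℝ) = 2*(k':ℝ) := by push_cast; try ring
  rw [c1] at hO
  rw [c2] at hE
  push_cast
  linarith
end

section
/- Let M = {f_1,...,f_{4m+2}} ⊂ R^{2m+1} be as above and let S ⊆ M ∖ {f_{4m+2}} be a linearly dependent subset such that S = span(S) ∩ (M ∖ {f_{4m+2}}), i.e. S contains all elements of M ∖ {f_{4m+2}} lying in the linear span of S. Then S contains a triple of the form {e_k, e_k − e_{k+1}, e_{k+1}} for some k with 1 ≤ k ≤ 2m. -/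
open Finset

lemma nbM_sub (m : ℕ) (j : ℕ) (hj : j < 2*m) :
    nbM m ⟨2*j+2, by omega⟩ = nbM m ⟨2*j, by omega⟩ - nbM m ⟨2*j+1, by omega⟩ := by
  funext t
  have h1 : ¬(2*j+2 = 4*m+1) := by omega
  have h2 : (2*j+2) % 2 = 0 := by omega
  have h3 : ¬(2*j = 4*m+1) := by omega
  have h5 : ¬(2*j+1 = 4*m+1) := by omega
  have h6 : ¬((2*j+1) % 2 = 0) := by omega
  have h7 : (2*j+2)/2 = j+1 := by omega
  have h9 : (2*j+1)/2 = j := by omega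
  simp only [nbM, Pi.sub_apply, h1, h2, h3, h5, h6, h7, h9, Nat.mul_div_cancel_left,
    if_true, if_false, ite_true, ite_false, Nat.mul_mod_right, Fin.val_mk]
  split_ifs <;> first | (exfalso; omega) | norm_num

lemma nbM_key (m : ℕ) (A : Set (Fin (4*m+2))) (hlast : ∀ i ∈ A, i.val ≠ 4*m+1)
    (c : Fin (4*m+2) → ℝ) (hA0 : ∀ i, i ∉ A → c i = 0)
    (t : Fin (2*m+1)) (i : Fin (4*m+2)) :
    c i * nbM m i t = (if i.val = 2*t.val then c i else 0) +
      (if i.val = 2*t.val+1 then c i else 0) - (if i.val + 1 = 2*t.val then c i else 0) := by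
  by_cases hi : i.val = 4*m+1
  · have h0 : c i = 0 := hA0 i (fun h => hlast i h hi)
    simp [h0]
  · have ht := t.isLt
    simp only [nbM, if_neg hi]
    by_cases hp : i.val % 2 = 0
    · simp only [if_pos hp]
      split_ifs <;> first | (exfalso; omega) | ring
    · simp only [if_neg hp]
      split_ifs <;> first | (exfalso; omega) | ring

/-- a linearly dependent, span-closed subset `S ⊆ M ∖ {f_{4m+2}}`
contains a triple `{e_k, e_k - e_{k+1}, e_{k+1}}` (indices `2k, 2k+1, 2k+2`, 0-based). -/
theorem stmt4 (m : ℕ) (A : Set (Fin (4*m+2)))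
    (hlast : ∀ i ∈ A, i.val ≠ 4*m+1)
    (hclosed : ∀ i : Fin (4*m+2), i.val ≠ 4*m+1 →
      nbM m i ∈ Submodule.span ℝ (nbM m '' A) → i ∈ A)
    (hdep : ¬ LinearIndependent ℝ (fun i : A => nbM m i)) :
    ∃ k : ℕ, k < 2*m ∧ ∀ i : Fin (4*m+2),
      (i.val = 2*k ∨ i.val = 2*k+1 ∨ i.val = 2*k+2) → i ∈ A := by
  classical
  by_contra hcon
  push_neg at hcon
  apply hdep
  haveI : Fintype ↥A := A.toFinite.fintype
  rw [Fintype.linearIndependent_iff]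
  intro g hg
  obtain ⟨c, hA0, hgi⟩ : ∃ c : Fin (4*m+2) → ℝ,
      (∀ i, i ∉ A → c i = 0) ∧ ∀ i : ↥A, c ↑i = g i :=
    ⟨fun i => if h : i ∈ A then g ⟨i, h⟩ else 0,
     fun i h => dif_neg h, fun i => dif_pos i.2⟩
  obtain ⟨C, hCc⟩ : ∃ C : ℕ → ℝ, ∀ k (hk : k < 4*m+2), C k = c ⟨k, hk⟩ :=
    ⟨fun k => if hk : k < 4*m+2 then c ⟨k, hk⟩ else 0, fun k hk => dif_pos hk⟩
  have hCmem : ∀ k (hk : k < 4*m+2), C k ≠ 0 → (⟨k, hk⟩ : Fin (4*m+2)) ∈ A := by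
    intro k hk h
    by_contra hA
    exact h ((hCc k hk).trans (hA0 _ hA))
  -- the total relation
  have hsum : ∑ i : Fin (4*m+2), c i • nbM m i = 0 := by
    calc ∑ i : Fin (4*m+2), c i • nbM m i
        = ∑ i ∈ A.toFinset, c i • nbM m i :=
          (Finset.sum_subset (Finset.subset_univ _)
            (fun x _ hx => by rw [hA0 x (fun h => hx (Set.mem_toFinset.mpr h)), zero_smul])).symm
      _ = ∑ i : ↥A, c ↑i • nbM m ↑i :=
          Finset.sum_subtype _ (fun x => Set.mem_toFinset) _
      _ = ∑ i : ↥A, g i • nbM m ↑i := Finset.sum_congr rfl (fun i _ => by rw [hgi i])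
      _ = 0 := hg
  have hsum_t : ∀ t : Fin (2*m+1), (∑ i : Fin (4*m+2), c i * nbM m i t) = 0 := by
    intro t
    have h := congrFun hsum t
    simpa [Finset.sum_apply, Pi.smul_apply, smul_eq_mul] using h
  have hif : ∀ k, k < 4*m+2 →
      (∑ i : Fin (4*m+2), if i.val = k then c i else 0) = C k := by
    intro k hk
    rw [hCc k hk, Finset.sum_eq_single (⟨k, hk⟩ : Fin (4*m+2))]
    · simp
    · intro b _ hb
      exact if_neg (fun h => hb (Fin.ext h))
    · intro h
      exact absurd (Finset.mem_univ _) h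
  have hco : ∀ t : Fin (2*m+1),
      C (2*t.val) + C (2*t.val+1) -
        (∑ i : Fin (4*m+2), if i.val + 1 = 2*t.val then c i else 0) = 0 := by
    intro t
    have h := hsum_t t
    rw [Finset.sum_congr rfl (fun i _ => nbM_key m A hlast c hA0 t i)] at h
    rw [Finset.sum_sub_distrib, Finset.sum_add_distrib] at h
    rw [hif _ (by omega), hif _ (by omega)] at h
    exact h
  have eq0 : C (2*0) + C (2*0+1) = 0 := by
    have h : C (2*0) + C (2*0+1) -
        (∑ i : Fin (4*m+2), if i.val + 1 = 2*(0:ℕ) then c i else 0) = 0 :=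
      hco ⟨0, by omega⟩
    have h0 : (∑ i : Fin (4*m+2), if i.val + 1 = 2*(0:ℕ) then c i else 0) = 0 :=
      Finset.sum_eq_zero (fun i _ => if_neg (by omega))
    rw [h0] at h
    linarith
  have eqS : ∀ T, T < 2*m → C (2*T+2) + C (2*T+3) - C (2*T+1) = 0 := by
    intro T hT
    have h : C (2*(T+1)) + C (2*(T+1)+1) -
        (∑ i : Fin (4*m+2), if i.val + 1 = 2*(T+1) then c i else 0) = 0 :=
      hco ⟨T+1, by omega⟩
    have h3 : (∑ i : Fin (4*m+2), if i.val + 1 = 2*(T+1) then c i else 0) = C (2*T+1) := by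
      rw [Finset.sum_congr rfl (fun i _ => if_congr (show (i.val + 1 = 2*(T+1)) ↔ (i.val = 2*T+1) from by omega) rfl rfl)]
      exact hif (2*T+1) (by omega)
    rw [h3, show 2*(T+1) = 2*T+2 from by ring, show (2*T+2)+1 = 2*T+3 from by ring] at h
    exact h
  -- matroid-closure consequence of ¬conclusion
  have HC : ∀ j, j < 2*m → C (2*j+1) ≠ 0 → C (2*j) = 0 := by
    intro j hj h1
    by_contra h0
    have m1 : (⟨2*j+1, by omega⟩ : Fin (4*m+2)) ∈ A := hCmem _ (by omega) h1
    have m0 : (⟨2*j, by omega⟩ : Fin (4*m+2)) ∈ A := hCmem _ (by omega) h0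
    have m2 : (⟨2*j+2, by omega⟩ : Fin (4*m+2)) ∈ A := by
      refine hclosed _ (show (2*j+2:ℕ) ≠ 4*m+1 from by omega) ?_
      rw [nbM_sub m j hj]
      exact sub_mem (Submodule.subset_span ⟨_, m0, rfl⟩)
        (Submodule.subset_span ⟨_, m1, rfl⟩)
    obtain ⟨i, hi, hiA⟩ := hcon j hj
    rcases hi with h | h | h
    · exact hiA (by rw [show i = (⟨2*j, by omega⟩ : Fin (4*m+2)) from Fin.ext h]; exact m0)
    · exact hiA (by rw [show i = (⟨2*j+1, by omega⟩ : Fin (4*m+2)) from Fin.ext h]; exact m1)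
    · exact hiA (by rw [show i = (⟨2*j+2, by omega⟩ : Fin (4*m+2)) from Fin.ext h]; exact m2)
  -- induction: all odd coefficients vanish
  have hb : ∀ T, T ≤ 2*m → C (2*T+1) = 0 := by
    intro T
    induction T with
    | zero =>
      intro _
      by_contra hne
      have hmem : (⟨2*0+1, by omega⟩ : Fin (4*m+2)) ∈ A := hCmem _ (by omega) hne
      have h1 : (2*0+1 : ℕ) ≠ 4*m+1 := hlast _ hmem
      have hc0 : C (2*0) = 0 := HC 0 (by omega) hne
      rw [hc0] at eq0
      exact hne (by linarith)
    | succ n ih =>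
      intro h
      by_contra hne
      have hmem : (⟨2*(n+1)+1, by omega⟩ : Fin (4*m+2)) ∈ A := hCmem _ (by omega) hne
      have h1 : (2*(n+1)+1 : ℕ) ≠ 4*m+1 := hlast _ hmem
      have hlt : n+1 < 2*m := by omega
      have hc0 : C (2*(n+1)) = 0 := HC (n+1) hlt hne
      have hprev : C (2*n+1) = 0 := ih (by omega)
      have heq := eqS n (by omega)
      rw [show 2*(n+1) = 2*n+2 from by ring] at hc0
      rw [show 2*(n+1)+1 = 2*n+3 from by ring] at hne
      rw [hc0, hprev] at heq
      exact hne (by linarith)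
  -- all even coefficients vanish
  have ha : ∀ T, T ≤ 2*m → C (2*T) = 0 := by
    intro T hT
    match T with
    | 0 =>
      have := hb 0 (by omega)
      linarith [eq0]
    | Nat.succ n =>
      have heq := eqS n (by omega)
      have h1 := hb n (by omega)
      have h2 := hb (n+1) (by omega)
      rw [show 2*(n+1)+1 = 2*n+3 from by ring] at h2
      rw [show 2*(n+1) = 2*n+2 from by ring]
      linarith
  have hC_all : ∀ k, k < 4*m+2 → C k = 0 := by
    intro k hk
    rcases Nat.even_or_odd k with ⟨j, hj⟩ | ⟨j, hj⟩
    · rw [show k = 2*j from by omega]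
      exact ha j (by omega)
    · rw [show k = 2*j+1 from by omega]
      exact hb j (by omega)
  intro i
  rw [← hgi i]
  have h2 := hC_all (i : Fin (4*m+2)).val (i : Fin (4*m+2)).isLt
  rwa [hCc _ (i : Fin (4*m+2)).isLt] at h2
end

section
/- Let M = {f_1,...,f_{4m+2}} ⊂ R^{2m+1} be as above and let S ⊆ M ∖ {f_{4m+2}} be span-closed in M ∖ {f_{4m+2}} (i.e., every element of M ∖ {f_{4m+2}} in the linear span of S lies in S). Then S can be written as a disjoint union S = S_0 ∪ S_1 ∪ ⋯ ∪ S_k where S_0 is linearly independent, each S_i (1 ≤ i ≤ k) is an interval of the form [e_{s_i}, e_{t_i}] = {f_j : 2s_i−1 ≤ j ≤ 2t_i−1}, and rank(S) = Σ_{i=0}^k rank(S_i). -/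
/-!
Index from 0: `nbM m ⟨2j, _⟩ = e_j` and `nbM m ⟨2j+1, _⟩ = e_j - e_{j+1}`, while index `4m+1` is
the alternating vector; every other `nbM m x` lives on the coordinates `x / 2` and `(x + 1) / 2`.
Let `U = unitCoords m A` be the set of `j` with `e_j ∈ A`. Span-closedness gives, for a difference
`e_j - e_{j+1} ∈ A`, that `j ∈ U ↔ j + 1 ∈ U`, and it puts into `A` every difference with both
endpoints in `U`. So `A` is the union of the residual differences, whose endpoints avoid `U`,
and of the blocks over the maximal intervals `[s, t]` of `U`, each block being the index interval
`[2s, 2t]`. The residual differences are independent (partial sums send `e_j - e_{j+1}` to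
`e_j`), and the pieces are supported on pairwise disjoint sets of coordinates, so the ranks add.
-/

open Finset

open Function

section RankOfDisjointSupports

variable {ι κ K : Type*} [DivisionRing K]

theorem finrank_iSup_eq_sum_of_iSupIndep [Fintype ι] {V : Type*} [AddCommGroup V] [Module K V]
    [FiniteDimensional K V] {p : ι → Submodule K V} (hp : iSupIndep p) :
    Module.finrank K ↥(⨆ i, p i) = ∑ i, Module.finrank K (p i) := by
  classical
  rw [Submodule.iSup_eq_range_dfinsupp_lsum,
    LinearMap.finrank_range_of_inj hp.dfinsupp_lsum_injective]
  exact Module.finrank_directSum K fun i => p i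

theorem iSupIndep_pi_compl_bot {C : ι → Set κ} (hC : Pairwise (Disjoint on C)) :
    iSupIndep fun i => Submodule.pi (C i)ᶜ fun _ : κ => (⊥ : Submodule K K) := by
  refine iSupIndep_def.2 fun i => Disjoint.mono_right (c := Submodule.pi (C i) fun _ => ⊥)
    (iSup₂_le fun j hji v hv t ht => hv t (Set.disjoint_right.1 (hC hji) ht))
    (Submodule.disjoint_def.2 fun v hv₁ hv₂ => funext fun t => ?_)
  by_cases ht : t ∈ C i
  · simpa using hv₂ t ht
  · simpa using hv₁ t ht

theorem finrank_iSup_span_eq_sum_of_support_subset [Fintype ι] [Finite κ] {V : ι → Set (κ → K)}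
    {C : ι → Set κ}
    (hC : Pairwise (Disjoint on C)) (hV : ∀ i, ∀ v ∈ V i, support v ⊆ C i) :
    Module.finrank K ↥(⨆ i, Submodule.span K (V i)) =
      ∑ i, Module.finrank K (Submodule.span K (V i)) :=
  finrank_iSup_eq_sum_of_iSupIndep <| (iSupIndep_pi_compl_bot hC).mono fun i =>
    Submodule.span_le.2 fun v hv t ht => by
      simpa using notMem_support.1 fun h => ht (hV i v hv h)

theorem finrank_span_union_iUnion_eq_sum {α : Type*} [Fintype ι] [Finite κ] (f : α → κ → K)
    {S : Set α} {T : ι → Set α} {D : Set κ} {C : ι → Set κ}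
    (hD : ∀ i, Disjoint D (C i)) (hC : Pairwise (Disjoint on C))
    (hS : ∀ x ∈ S, support (f x) ⊆ D) (hT : ∀ i, ∀ x ∈ T i, support (f x) ⊆ C i) :
    Module.finrank K (Submodule.span K (f '' (S ∪ ⋃ i, T i))) =
      Module.finrank K (Submodule.span K (f '' S)) +
        ∑ i, Module.finrank K (Submodule.span K (f '' T i)) := by
  have hsum := finrank_iSup_span_eq_sum_of_support_subset (K := K)
    (V := fun o : Option ι => f '' o.elim S T) (C := fun o => o.elim D C) ?_ ?_
  · rwa [iSup_option, Fintype.sum_option, ← Submodule.span_iUnion, ← Submodule.span_union,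
      ← Set.image_iUnion, ← Set.image_union] at hsum
  · rintro (_ | i) (_ | j) hij
    · exact absurd rfl hij
    · exact hD j
    · exact (hD i).symm
    · exact hC (Option.some_injective _ |>.ne_iff.1 hij)
  · rintro (_ | i) _ ⟨x, hx, rfl⟩
    · exact hS x hx
    · exact hT i x hx

end RankOfDisjointSupports

namespace Set

variable {α : Type*}

theorem pairwiseDisjoint_range_ordConnectedComponent [LinearOrder α] (s : Set α) :
    (range (ordConnectedComponent s)).PairwiseDisjoint id := by
  rintro _ ⟨x, rfl⟩ _ ⟨y, rfl⟩ hne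
  refine Set.disjoint_left.2 fun z hzx hzy => hne ?_
  exact (ordConnectedComponent_eq hzx).trans (ordConnectedComponent_eq hzy).symm

theorem exists_ordConnectedComponent_eq_Icc [ConditionallyCompleteLinearOrder α]
    [LocallyFiniteOrder α] {s : Set α} {x : α} (hx : x ∈ s) (h₁ : BddBelow s) (h₂ : BddAbove s) :
    ∃ a b, a ≤ b ∧ ordConnectedComponent s x = Icc a b := by
  have hne : (ordConnectedComponent s x).Nonempty := nonempty_ordConnectedComponent.2 hx
  have hIcc := (hne.ordConnected_iff_of_bdd (h₁.mono ordConnectedComponent_subset)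
    (h₂.mono ordConnectedComponent_subset)).1 inferInstance
  exact ⟨_, _, nonempty_Icc.1 (hIcc ▸ hne), hIcc⟩

end Set

section PartialSums

variable (R : Type*) [Semiring R] (n : ℕ)

def partialSums : (Fin n → R) →ₗ[R] (Fin n → R) :=
  LinearMap.pi fun t => ∑ u ∈ Iic t, LinearMap.proj u

variable {R n}

theorem partialSums_single (j t : Fin n) :
    partialSums R n (Pi.single j 1) t = if j ≤ t then 1 else 0 := by
  simp [partialSums, Pi.single_apply]

end PartialSums

namespace nbM

variable {m : ℕ}

theorem apply_of_ne_last {x : Fin (4 * m + 2)} (hx : x.val ≠ 4 * m + 1) (t : Fin (2 * m + 1)) :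
    nbM m x t = if t.val = x.val / 2 then 1 else if t.val = (x.val + 1) / 2 then -1 else 0 := by
  unfold nbM
  rw [if_neg hx]
  split_ifs <;> dsimp only <;> split_ifs <;> first | omega | rfl

theorem two_mul_eq_single {j : ℕ} (h : 2 * j < 4 * m + 2) :
    nbM m ⟨2 * j, h⟩ = Pi.single (⟨j, by omega⟩ : Fin (2 * m + 1)) 1 := by
  ext t
  rw [apply_of_ne_last (x := ⟨2 * j, h⟩) (by dsimp only; omega), Pi.single_apply]
  simp only [Fin.ext_iff]
  split_ifs <;> first | omega | rfl

theorem two_mul_add_one_eq_sub {j : ℕ} (h : 2 * (j + 1) < 4 * m + 2) :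
    nbM m ⟨2 * j + 1, by omega⟩ = nbM m ⟨2 * j, by omega⟩ - nbM m ⟨2 * (j + 1), h⟩ := by
  ext t
  rw [apply_of_ne_last (x := ⟨2 * j + 1, _⟩) (by dsimp only; omega), Pi.sub_apply,
    two_mul_eq_single, two_mul_eq_single, Pi.single_apply, Pi.single_apply]
  simp only [Fin.ext_iff]
  split_ifs <;> first | omega | norm_num

theorem support_subset {x : Fin (4 * m + 2)} (hx : x.val ≠ 4 * m + 1) :
    support (nbM m x) ⊆ Fin.val ⁻¹' {x.val / 2, (x.val + 1) / 2} := by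
  intro t ht
  rw [mem_support, apply_of_ne_last hx] at ht
  simp only [Set.mem_preimage, Set.mem_insert_iff, Set.mem_singleton_iff]
  split_ifs at ht <;> first | omega | simp at ht

theorem partialSums_two_mul_add_one {j : ℕ} (h : 2 * (j + 1) < 4 * m + 2) :
    partialSums ℝ _ (nbM m ⟨2 * j + 1, by omega⟩) = Pi.single ⟨j, by omega⟩ 1 := by
  ext t
  rw [two_mul_add_one_eq_sub h, two_mul_eq_single, two_mul_eq_single, map_sub, Pi.sub_apply,
    partialSums_single, partialSums_single, Pi.single_apply]
  simp only [Fin.ext_iff, Fin.le_def]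
  split_ifs <;> first | omega | norm_num

theorem linearIndependent_of_odd {S : Set (Fin (4 * m + 2))}
    (hS : ∀ x ∈ S, Odd x.val ∧ x.val ≠ 4 * m + 1) :
    LinearIndependent ℝ (fun x : S => nbM m x) := by
  let half (x : S) : Fin (2 * m + 1) := ⟨x.val.val / 2, by omega⟩
  have hhalf : Injective half := fun x y hxy => by
    obtain ⟨a, ha⟩ := (hS x x.2).1
    obtain ⟨b, hb⟩ := (hS y y.2).1
    simp only [half, Fin.mk.injEq] at hxy
    exact Subtype.ext (Fin.ext (by omega))
  refine LinearIndependent.of_comp (partialSums ℝ _) ?_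
  convert (Pi.basisFun ℝ (Fin (2 * m + 1))).linearIndependent.comp half hhalf using 1
  funext x
  obtain ⟨j, hj⟩ := (hS x x.2).1
  have hx : (x : Fin (4 * m + 2)) = ⟨2 * j + 1, by omega⟩ := Fin.ext hj
  simp only [comp_apply, Pi.basisFun_apply, half, hx]
  rw [partialSums_two_mul_add_one (by have := (hS x x.2).2; omega)]
  congr 2
  omega

def IsSpanClosed (m : ℕ) (A : Set (Fin (4 * m + 2))) : Prop :=
  ∀ i : Fin (4 * m + 2), i.val ≠ 4 * m + 1 → nbM m i ∈ Submodule.span ℝ (nbM m '' A) → i ∈ A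

def unitCoords (m : ℕ) (A : Set (Fin (4 * m + 2))) : Set ℕ :=
  {j | ∃ h : 2 * j < 4 * m + 2, (⟨2 * j, h⟩ : Fin (4 * m + 2)) ∈ A}

def residual (m : ℕ) (A : Set (Fin (4 * m + 2))) : Set (Fin (4 * m + 2)) :=
  {x | x ∈ A ∧ x.val / 2 ∉ unitCoords m A}

def block (m : ℕ) (C : Set ℕ) : Set (Fin (4 * m + 2)) :=
  {x | x.val / 2 ∈ C ∧ (x.val + 1) / 2 ∈ C}

variable {A : Set (Fin (4 * m + 2))}

theorem unitCoords_subset_Iic : unitCoords m A ⊆ Set.Iic (2 * m) := fun j ⟨h, _⟩ => by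
  rw [Set.mem_Iic]
  omega

theorem half_mem_unitCoords_of_even {x : Fin (4 * m + 2)} (hx : x ∈ A) (he : Even x.val) :
    x.val / 2 ∈ unitCoords m A := by
  obtain ⟨j, hj⟩ := he
  refine ⟨by omega, ?_⟩
  convert hx
  omega

theorem IsSpanClosed.half_mem_iff (hA : IsSpanClosed m A) {x : Fin (4 * m + 2)} (hxA : x ∈ A)
    (hx : x.val ≠ 4 * m + 1) :
    x.val / 2 ∈ unitCoords m A ↔ (x.val + 1) / 2 ∈ unitCoords m A := by
  obtain ⟨j, hj | hj⟩ := Nat.even_or_odd' x.val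
  · rw [show (x.val + 1) / 2 = x.val / 2 by omega]
  have h₂ : 2 * (j + 1) < 4 * m + 2 := by omega
  have hdiff : nbM m x = nbM m ⟨2 * j, by omega⟩ - nbM m ⟨2 * (j + 1), h₂⟩ := by
    rw [← two_mul_add_one_eq_sub h₂]
    congr
    exact Fin.ext hj
  have hxs : nbM m x ∈ Submodule.span ℝ (nbM m '' A) := Submodule.subset_span ⟨x, hxA, rfl⟩
  rw [show x.val / 2 = j by omega, show (x.val + 1) / 2 = j + 1 by omega]
  constructor
  · rintro ⟨_, hjA⟩
    refine ⟨h₂, hA _ (by dsimp only; omega) ?_⟩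
    rw [show nbM m ⟨2 * (j + 1), h₂⟩ = nbM m ⟨2 * j, _⟩ - nbM m x by rw [hdiff]; abel]
    exact sub_mem (Submodule.subset_span ⟨_, hjA, rfl⟩) hxs
  · rintro ⟨_, hjA⟩
    refine ⟨by omega, hA _ (by dsimp only; omega) ?_⟩
    rw [show nbM m ⟨2 * j, _⟩ = nbM m x + nbM m ⟨2 * (j + 1), h₂⟩ by rw [hdiff]; abel]
    exact add_mem hxs (Submodule.subset_span ⟨_, hjA, rfl⟩)

theorem IsSpanClosed.mem_of_half_mem (hA : IsSpanClosed m A) {x : Fin (4 * m + 2)}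
    (h₁ : x.val / 2 ∈ unitCoords m A) (h₂ : (x.val + 1) / 2 ∈ unitCoords m A) : x ∈ A := by
  obtain ⟨j, hj | hj⟩ := Nat.even_or_odd' x.val
  · obtain ⟨_, hxA⟩ := h₁
    convert hxA
    omega
  rw [show x.val / 2 = j by omega] at h₁
  rw [show (x.val + 1) / 2 = j + 1 by omega] at h₂
  obtain ⟨_, h₁⟩ := h₁
  obtain ⟨hlt, h₂⟩ := h₂
  refine hA x (by omega) ?_
  rw [show x = ⟨2 * j + 1, by omega⟩ from Fin.ext hj, two_mul_add_one_eq_sub hlt]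
  exact sub_mem (Submodule.subset_span ⟨_, h₁, rfl⟩) (Submodule.subset_span ⟨_, h₂, rfl⟩)

theorem IsSpanClosed.eq_residual_union_block (hA : IsSpanClosed m A)
    (hlast : ∀ x ∈ A, x.val ≠ 4 * m + 1) :
    A = residual m A ∪
      ⋃ j ∈ unitCoords m A, block m (Set.ordConnectedComponent (unitCoords m A) j) := by
  ext x
  simp only [Set.mem_union, Set.mem_iUnion, exists_prop]
  constructor
  · intro hx
    by_cases h : x.val / 2 ∈ unitCoords m A
    · refine Or.inr ⟨_, h, Set.self_mem_ordConnectedComponent.2 h, fun z hz => ?_⟩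
      obtain rfl | rfl : z = x.val / 2 ∨ z = (x.val + 1) / 2 := by
        rw [Set.mem_uIcc] at hz
        omega
      exacts [h, (hA.half_mem_iff hx (hlast x hx)).1 h]
    · exact Or.inl ⟨hx, h⟩
  · rintro (hx | ⟨j, -, h₁, h₂⟩)
    · exact hx.1
    · exact hA.mem_of_half_mem (Set.ordConnectedComponent_subset h₁)
        (Set.ordConnectedComponent_subset h₂)

theorem disjoint_residual_block {C : Set ℕ} (hC : C ⊆ unitCoords m A) :
    Disjoint (residual m A) (block m C) :=
  Set.disjoint_left.2 fun _ hx hxC => hx.2 (hC hxC.1)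

theorem disjoint_block {C C' : Set ℕ} (h : Disjoint C C') : Disjoint (block m C) (block m C') :=
  Set.disjoint_left.2 fun _ hx hx' => Set.disjoint_left.1 h hx.1 hx'.1

theorem block_Icc (s t : ℕ) :
    block m (Set.Icc s t) = {x : Fin (4 * m + 2) | 2 * s ≤ x.val ∧ x.val ≤ 2 * t} := by
  ext x
  simp only [block, Set.mem_Icc, Set.mem_ofPred_eq]
  omega

theorem exists_block_ordConnectedComponent_eq {j : ℕ} (hj : j ∈ unitCoords m A) :
    ∃ s t : ℕ, s ≤ t ∧ t ≤ 2 * m ∧ block m (Set.ordConnectedComponent (unitCoords m A) j) =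
      {x : Fin (4 * m + 2) | 2 * s ≤ x.val ∧ x.val ≤ 2 * t} := by
  obtain ⟨s, t, hst, hC⟩ := Set.exists_ordConnectedComponent_eq_Icc hj (OrderBot.bddBelow _)
    (bddAbove_Iic.mono unitCoords_subset_Iic)
  have ht : t ∈ unitCoords m A :=
    Set.ordConnectedComponent_subset (hC ▸ Set.right_mem_Icc.2 hst)
  exact ⟨s, t, hst, unitCoords_subset_Iic ht, by rw [hC, block_Icc]⟩

theorem linearIndependent_residual (hlast : ∀ x ∈ A, x.val ≠ 4 * m + 1) :
    LinearIndependent ℝ (fun x : residual m A => nbM m x) :=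
  linearIndependent_of_odd fun x hx =>
    ⟨Nat.not_even_iff_odd.1 fun he => hx.2 (half_mem_unitCoords_of_even hx.1 he), hlast x hx.1⟩

theorem IsSpanClosed.support_subset_of_mem_residual (hA : IsSpanClosed m A)
    (hlast : ∀ x ∈ A, x.val ≠ 4 * m + 1) {x : Fin (4 * m + 2)} (hx : x ∈ residual m A) :
    support (nbM m x) ⊆ Fin.val ⁻¹' (unitCoords m A)ᶜ := by
  refine (support_subset (hlast x hx.1)).trans fun t ht => ?_
  obtain h | h : t.val = x.val / 2 ∨ t.val = (x.val + 1) / 2 := ht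
  · simpa only [Set.mem_preimage, Set.mem_compl_iff, h] using hx.2
  · simpa only [Set.mem_preimage, Set.mem_compl_iff, h]
      using (hA.half_mem_iff hx.1 (hlast x hx.1)).not.1 hx.2

theorem support_subset_of_mem_block {C : Set ℕ} (hC : C ⊆ Set.Iic (2 * m))
    {x : Fin (4 * m + 2)} (hx : x ∈ block m C) : support (nbM m x) ⊆ Fin.val ⁻¹' C := by
  have : (x.val + 1) / 2 ≤ 2 * m := hC hx.2
  refine (support_subset (by omega)).trans fun t ht => ?_
  obtain h | h : t.val = x.val / 2 ∨ t.val = (x.val + 1) / 2 := ht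
  · simpa only [Set.mem_preimage, h] using hx.1
  · simpa only [Set.mem_preimage, h] using hx.2

end nbM

/-- structure of span-closed subsets of `M ∖ {f_{4m+2}}`: a disjoint union of
an independent set `S_0` and intervals `S_1, …, S_k`, additive in rank. -/
theorem stmt5 (m : ℕ) (A : Set (Fin (4*m+2)))
    (hlast : ∀ i ∈ A, i.val ≠ 4*m+1)
    (hclosed : ∀ i : Fin (4*m+2), i.val ≠ 4*m+1 →
      nbM m i ∈ Submodule.span ℝ (nbM m '' A) → i ∈ A) :
    ∃ (k : ℕ) (S0 : Set (Fin (4*m+2))) (T : Fin k → Set (Fin (4*m+2))),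
      A = S0 ∪ ⋃ i, T i ∧
      (∀ i, Disjoint S0 (T i)) ∧
      (Pairwise fun i j => Disjoint (T i) (T j)) ∧
      LinearIndependent ℝ (fun x : S0 => nbM m x) ∧
      (∀ i, ∃ s t : ℕ, s ≤ t ∧ t ≤ 2*m ∧
        T i = {j : Fin (4*m+2) | 2*s ≤ j.val ∧ j.val ≤ 2*t}) ∧
      Module.finrank ℝ (Submodule.span ℝ (nbM m '' A)) =
        Module.finrank ℝ (Submodule.span ℝ (nbM m '' S0)) +
          ∑ i, Module.finrank ℝ (Submodule.span ℝ (nbM m '' T i)) := by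
  have hA : nbM.IsSpanClosed m A := hclosed
  set U := nbM.unitCoords m A
  obtain ⟨k, e, he⟩ := (((Set.finite_Iic _).subset nbM.unitCoords_subset_Iic).image
    (Set.ordConnectedComponent U)).fin_embedding
  have hcomp : ∀ i, ∃ j ∈ U, Set.ordConnectedComponent U j = e i := fun i =>
    (Set.ext_iff.1 he (e i)).1 ⟨i, rfl⟩
  have heU : ∀ i, e i ⊆ U := fun i => by
    obtain ⟨j, -, hj⟩ := hcomp i
    exact hj ▸ Set.ordConnectedComponent_subset
  have hdisj : Pairwise fun i i' => Disjoint (e i) (e i') := fun i i' hii' => by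
    obtain ⟨j, -, hj⟩ := hcomp i
    obtain ⟨j', -, hj'⟩ := hcomp i'
    exact Set.pairwiseDisjoint_range_ordConnectedComponent U ⟨j, hj⟩ ⟨j', hj'⟩
      (e.injective.ne hii')
  have hdecomp : A = nbM.residual m A ∪ ⋃ i, nbM.block m (e i) := by
    rw [← Set.biUnion_range, he, Set.biUnion_image]
    exact hA.eq_residual_union_block hlast
  refine ⟨k, _, _, hdecomp, fun i => nbM.disjoint_residual_block (heU i),
    fun i i' hii' => nbM.disjoint_block (hdisj hii'), nbM.linearIndependent_residual hlast,
    fun i => ?_, ?_⟩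
  · obtain ⟨j, hj, hji⟩ := hcomp i
    exact hji ▸ nbM.exists_block_ordConnectedComponent_eq hj
  · conv_lhs => rw [hdecomp]
    exact finrank_span_union_iUnion_eq_sum _
      (fun i => (disjoint_compl_left.mono_right (heU i)).preimage _)
      (fun i i' hii' => (hdisj hii').preimage _)
      (fun x => hA.support_subset_of_mem_residual hlast)
      (fun i x => nbM.support_subset_of_mem_block ((heU i).trans nbM.unitCoords_subset_Iic))
end

section
/- Let M = {f_1,...,f_{4m+2}} ⊂ R^{2m+1} be as above. If B ⊆ M is a basis of R^{2m+1} and B̂ is the (2m+1)×(2m+1) matrix whose rows are the vectors of B (in any order), then |det B̂| = 1. -/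
open Finset

/-! ### Auxiliary machinery

We multiply the matrix on the right by a unimodular "alternating difference" matrix `Pm`.
After this transformation every row has at most one entry `+1`, at most one entry `-1`, and
all other entries `0`; a classical induction (as for incidence matrices of graphs) shows any
such square matrix has determinant in `{0, 1, -1}`. -/

/-- A row with at most one `+1` entry, at most one `-1` entry, all others `0`. -/
def RowP {n : ℕ} (v : Fin n → ℝ) : Prop :=
  (∀ c, v c = 0 ∨ v c = 1 ∨ v c = -1) ∧
  (∀ c c', v c = 1 → v c' = 1 → c = c') ∧
  (∀ c c', v c = -1 → v c' = -1 → c = c')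

lemma rowP_of {n : ℕ} (v : Fin n → ℝ) (u w : ℕ)
    (h : ∀ c : Fin n, v c = 0 ∨ (v c = 1 ∧ (c : ℕ) = u) ∨ (v c = -1 ∧ (c : ℕ) = w)) :
    RowP v := by
  refine ⟨fun c => ?_, fun c c' h1 h1' => ?_, fun c c' h1 h1' => ?_⟩
  · rcases h c with h0 | ⟨h0, _⟩ | ⟨h0, _⟩ <;> tauto
  · have hc : (c : ℕ) = u := by
      rcases h c with h0 | ⟨_, h0⟩ | ⟨h0, _⟩ <;> first | exact h0 | (rw [h1] at h0; norm_num at h0)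
    have hc' : (c' : ℕ) = u := by
      rcases h c' with h0 | ⟨_, h0⟩ | ⟨h0, _⟩ <;> first | exact h0 | (rw [h1'] at h0; norm_num at h0)
    exact Fin.ext (hc.trans hc'.symm)
  · have hc : (c : ℕ) = w := by
      rcases h c with h0 | ⟨h0, _⟩ | ⟨_, h0⟩ <;> first | exact h0 | (rw [h1] at h0; norm_num at h0)
    have hc' : (c' : ℕ) = w := by
      rcases h c' with h0 | ⟨h0, _⟩ | ⟨_, h0⟩ <;> first | exact h0 | (rw [h1'] at h0; norm_num at h0)
    exact Fin.ext (hc.trans hc'.symm)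

/-- Any square matrix all of whose rows satisfy `RowP` has determinant `0`, `1`, or `-1`. -/
lemma key : ∀ (n : ℕ) (M : Matrix (Fin n) (Fin n) ℝ), (∀ r, RowP (M r)) →
    M.det = 0 ∨ M.det = 1 ∨ M.det = -1 := by
  intro n
  induction n with
  | zero => intro M _; right; left; exact Matrix.det_fin_zero
  | succ n ih =>
    intro M hM
    by_cases H : ∃ r c0, ∀ c, c ≠ c0 → M r c = 0
    · obtain ⟨r, c0, h0⟩ := H
      rw [Matrix.det_succ_row M r, Finset.sum_eq_single c0]
      · have hd := ih (Matrix.of fun r' c => M (r.succAbove r') (c0.succAbove c)) ?_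
        · set d := (Matrix.of fun r' c => M (r.succAbove r') (c0.succAbove c)).det with hdd
          have hde : (M.submatrix r.succAbove c0.succAbove).det = d := rfl
          rw [hde]
          have hsg : ((-1 : ℝ)) ^ ((r : ℕ) + (c0 : ℕ)) = 1 ∨ ((-1 : ℝ)) ^ ((r : ℕ) + (c0 : ℕ)) = -1 := by
            rcases Nat.even_or_odd ((r : ℕ) + (c0 : ℕ)) with he | he
            · left; exact he.neg_one_pow
            · right; exact he.neg_one_pow
          rcases (hM r).1 c0 with hv | hv | hv <;> rcases hd with hd | hd | hd <;>
            rcases hsg with hs | hs <;> rw [hv, hd, hs] <;> norm_num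
        · intro r'
          obtain ⟨h1, h2, h3⟩ := hM (r.succAbove r')
          refine ⟨fun c => h1 _, fun c c' hc hc' => ?_, fun c c' hc hc' => ?_⟩
          · exact Fin.succAbove_right_injective (h2 _ _ hc hc')
          · exact Fin.succAbove_right_injective (h3 _ _ hc hc')
      · intro b _ hb
        rw [h0 b hb]; ring
      · intro hc; exact absurd (Finset.mem_univ c0) hc
    · push_neg at H
      have hsum : ∀ r, ∑ c, M r c = 0 := by
        intro r
        obtain ⟨c1, _, hc1⟩ := H r ⟨0, Nat.succ_pos n⟩
        obtain ⟨c2, hne, hc2⟩ := H r c1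
        obtain ⟨h1, h2, h3⟩ := hM r
        have hv1 : M r c1 = 1 ∨ M r c1 = -1 := by rcases h1 c1 with h | h | h <;> tauto
        have hv2 : M r c2 = 1 ∨ M r c2 = -1 := by rcases h1 c2 with h | h | h <;> tauto
        have hopp : M r c1 + M r c2 = 0 := by
          rcases hv1 with h | h <;> rcases hv2 with h' | h'
          · exact absurd (h2 _ _ h' h) hne
          · rw [h, h']; ring
          · rw [h, h']; ring
          · exact absurd (h3 _ _ h' h) hne
        have hz : ∀ c, c ≠ c1 → c ≠ c2 → M r c = 0 := by
          intro c hcne1 hcne2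
          rcases h1 c with h | h | h
          · exact h
          · rcases hv1 with h' | h'
            · exact absurd (h2 _ _ h h') hcne1
            · rcases hv2 with h'' | h''
              · exact absurd (h2 _ _ h h'') hcne2
              · rw [h', h''] at hopp; norm_num at hopp
          · rcases hv1 with h' | h'
            · rcases hv2 with h'' | h''
              · rw [h', h''] at hopp; norm_num at hopp
              · exact absurd (h3 _ _ h h'') hcne2
            · exact absurd (h3 _ _ h h') hcne1
        calc ∑ c, M r c = ∑ c ∈ ({c2, c1} : Finset _), M r c := by
              refine (Finset.sum_subset (Finset.subset_univ _) ?_).symm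
              intro c _ hc
              simp only [Finset.mem_insert, Finset.mem_singleton] at hc
              push_neg at hc
              exact hz c hc.2 hc.1
          _ = M r c2 + M r c1 := Finset.sum_pair hne
          _ = 0 := by rw [add_comm]; exact hopp
      left
      rw [← Matrix.exists_mulVec_eq_zero_iff]
      refine ⟨fun _ => 1, ?_, ?_⟩
      · intro h
        have := congrFun h ⟨0, Nat.succ_pos n⟩
        norm_num at this
      · funext r
        simp only [Matrix.mulVec, dotProduct, mul_one]
        exact hsum r

/-- The unimodular transformation matrix. -/
noncomputable def Pm (m : ℕ) : Matrix (Fin (2*m+1)) (Fin (2*m+1)) ℝ :=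
  fun t c => (-1:ℝ)^(t:ℕ) * ((if t = c then 1 else 0) - (if (t:ℕ) = (c:ℕ)+1 then 1 else 0))

/-- The effect of right multiplication by `Pm` on a row vector. -/
noncomputable def Tv (m : ℕ) (v : Fin (2*m+1) → ℝ) (c : Fin (2*m+1)) : ℝ :=
  (-1:ℝ)^(c:ℕ) * (v c + (if h : (c:ℕ)+1 < 2*m+1 then v ⟨(c:ℕ)+1, h⟩ else 0))

lemma sum_formula (m : ℕ) (v : Fin (2*m+1) → ℝ) (c : Fin (2*m+1)) :
    ∑ t, v t * Pm m t c = Tv m v c := by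
  have hsplit : ∀ t : Fin (2*m+1), v t * Pm m t c =
      (if t = c then (-1:ℝ)^(t:ℕ) * v t else 0) -
      (if (t:ℕ) = (c:ℕ)+1 then (-1:ℝ)^(t:ℕ) * v t else 0) := by
    intro t
    unfold Pm
    split_ifs with h1 h2 h2 <;> ring
  simp only [hsplit]
  rw [Finset.sum_sub_distrib]
  have h1 : ∑ t, (if t = c then (-1:ℝ)^(t:ℕ) * v t else 0) = (-1:ℝ)^(c:ℕ) * v c := by
    rw [Finset.sum_ite_eq' Finset.univ c fun t => (-1:ℝ)^(t:ℕ) * v t]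
    simp
  have h2 : ∑ t : Fin (2*m+1), (if (t:ℕ) = (c:ℕ)+1 then (-1:ℝ)^(t:ℕ) * v t else 0) =
      (if h : (c:ℕ)+1 < 2*m+1 then (-1:ℝ)^((c:ℕ)+1) * v ⟨(c:ℕ)+1, h⟩ else 0) := by
    by_cases h : (c:ℕ)+1 < 2*m+1
    · rw [dif_pos h, Finset.sum_eq_single (⟨(c:ℕ)+1, h⟩ : Fin (2*m+1))]
      · simp
      · intro b _ hb
        rw [if_neg]
        intro hbv
        exact hb (Fin.ext hbv)
      · intro hc; exact absurd (Finset.mem_univ _) hc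
    · rw [dif_neg h]
      refine Finset.sum_eq_zero fun t _ => ?_
      rw [if_neg]
      intro ht
      exact h (ht ▸ t.isLt)
  rw [h1, h2, Tv]
  by_cases h : (c:ℕ)+1 < 2*m+1
  · rw [dif_pos h, dif_pos h, pow_succ]
    ring
  · rw [dif_neg h, dif_neg h]
    ring

lemma pm_det_abs (m : ℕ) : |(Pm m).det| = 1 := by
  have htri : (Pm m).BlockTriangular OrderDual.toDual := by
    intro i j hij
    have hij' : i < j := hij
    unfold Pm
    rw [if_neg, if_neg]
    · ring
    · omega
    · exact Fin.ne_of_lt hij'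
  rw [Matrix.det_of_lowerTriangular _ htri]
  rw [Finset.abs_prod]
  refine Finset.prod_eq_one fun i _ => ?_
  unfold Pm
  rw [if_pos rfl, if_neg (by omega)]
  rw [abs_mul]
  simp [abs_pow]

lemma nbM_eval_A {m : ℕ} {i : Fin (4*m+2)} (hi : i.val = 4*m+1) (t : Fin (2*m+1)) :
    nbM m i t = (-1:ℝ)^(t:ℕ) := by unfold nbM; rw [if_pos hi]

lemma nbM_eval_B {m : ℕ} {i : Fin (4*m+2)} (hi : i.val % 2 = 0) (t : Fin (2*m+1)) :
    nbM m i t = if (t:ℕ) = i.val/2 then 1 else 0 := by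
  unfold nbM; rw [if_neg (by omega), if_pos hi]

lemma nbM_eval_C {m : ℕ} {i : Fin (4*m+2)} (hi : i.val % 2 = 1) (hi2 : i.val ≠ 4*m+1)
    (t : Fin (2*m+1)) :
    nbM m i t = if (t:ℕ) = i.val/2 then 1 else if (t:ℕ) = i.val/2+1 then -1 else 0 := by
  unfold nbM; rw [if_neg hi2, if_neg (by omega)]

lemma npow_even {k : ℕ} (h : k % 2 = 0) : (-1:ℝ)^k = 1 := Even.neg_one_pow (Nat.even_iff.2 h)
lemma npow_odd {k : ℕ} (h : k % 2 = 1) : (-1:ℝ)^k = -1 := Odd.neg_one_pow (Nat.odd_iff.2 h)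

/-- Every transformed row of the ground set satisfies `RowP`. -/
lemma rows (m : ℕ) (i : Fin (4*m+2)) : RowP (fun c => Tv m (nbM m i) c) := by
  have hilt : i.val < 4*m+2 := i.isLt
  by_cases hA : i.val = 4*m+1
  · -- alternating row: becomes the unit vector at the last coordinate
    apply rowP_of _ (2*m) 0
    intro c
    have hc := c.isLt
    simp only [Tv, nbM_eval_A hA]
    by_cases hc2 : (c:ℕ) = 2*m
    · right; left
      rw [dif_neg (by omega), add_zero, ← pow_add]
      exact ⟨npow_even (by omega), hc2⟩
    · left
      rw [dif_pos (show (c:ℕ)+1 < 2*m+1 by omega), pow_succ]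
      ring
  · set j := i.val / 2 with hj
    by_cases hB : i.val % 2 = 0
    · -- unit vector e_j
      have hjle : j ≤ 2*m := by omega
      by_cases hjp : j % 2 = 0
      · apply rowP_of _ j (j-1)
        intro c
        have hc := c.isLt
        simp only [Tv, nbM_eval_B hB, ← hj]
        by_cases h1 : (c:ℕ) = j
        · right; left
          rw [if_pos h1]
          have : (if h : (c:ℕ)+1 < 2*m+1 then (if (c:ℕ)+1 = j then (1:ℝ) else 0) else 0) = 0 := by
            split_ifs with _ h2
            · omega
            · rfl
            · rfl
          rw [this, add_zero, mul_one, h1]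
          exact ⟨npow_even hjp, rfl⟩
        · by_cases h2 : (c:ℕ)+1 = j
          · right; right
            rw [if_neg h1, dif_pos (by omega), if_pos h2, zero_add, mul_one]
            refine ⟨?_, by omega⟩
            have : (c:ℕ) % 2 = 1 := by omega
            exact npow_odd this
          · left
            rw [if_neg h1]
            have : (if h : (c:ℕ)+1 < 2*m+1 then (if (c:ℕ)+1 = j then (1:ℝ) else 0) else 0) = 0 := by
              split_ifs <;> first | omega | rfl
            rw [this]; ring
      · apply rowP_of _ (j-1) j
        intro c
        have hc := c.isLt
        simp only [Tv, nbM_eval_B hB, ← hj]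
        by_cases h1 : (c:ℕ) = j
        · right; right
          rw [if_pos h1]
          have : (if h : (c:ℕ)+1 < 2*m+1 then (if (c:ℕ)+1 = j then (1:ℝ) else 0) else 0) = 0 := by
            split_ifs with _ h2
            · omega
            · rfl
            · rfl
          rw [this, add_zero, mul_one, h1]
          exact ⟨npow_odd (by omega), rfl⟩
        · by_cases h2 : (c:ℕ)+1 = j
          · right; left
            rw [if_neg h1, dif_pos (by omega), if_pos h2, zero_add, mul_one]
            refine ⟨?_, by omega⟩
            exact npow_even (by omega)
          · left
            rw [if_neg h1]
            have : (if h : (c:ℕ)+1 < 2*m+1 then (if (c:ℕ)+1 = j then (1:ℝ) else 0) else 0) = 0 := by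
              split_ifs <;> first | omega | rfl
            rw [this]; ring
    · -- difference vector e_j - e_{j+1}
      have hBo : i.val % 2 = 1 := by omega
      have hjle : j ≤ 2*m - 1 := by omega
      have hjlt : j + 1 ≤ 2*m := by omega
      have key : ∀ c : Fin (2*m+1),
          Tv m (nbM m i) c = 0 ∨
          (Tv m (nbM m i) c = (-1:ℝ)^(j-1) ∧ (c:ℕ)+1 = j) ∨
          (Tv m (nbM m i) c = (-1:ℝ)^j ∧ (c:ℕ) = j+1) := by
        intro c
        have hc := c.isLt
        simp only [Tv, nbM_eval_C hBo hA, ← hj]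
        by_cases h1 : (c:ℕ) = j
        · left
          rw [if_pos h1, dif_pos (by omega), if_neg (by omega), if_pos (by omega)]
          ring
        · by_cases h2 : (c:ℕ) = j+1
          · right; right
            rw [if_neg h1, if_pos h2]
            have : (if h : (c:ℕ)+1 < 2*m+1 then
                (if (c:ℕ)+1 = j then (1:ℝ) else if (c:ℕ)+1 = j+1 then -1 else 0) else 0) = 0 := by
              split_ifs <;> first | omega | rfl
            rw [this, add_zero, h2, pow_succ]
            exact ⟨by ring, rfl⟩
          · by_cases h3 : (c:ℕ)+1 = j
            · right; left
              rw [if_neg h1, if_neg h2, dif_pos (by omega), if_pos h3, zero_add, mul_one]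
              refine ⟨?_, h3⟩
              congr 1
              omega
            · left
              rw [if_neg h1, if_neg h2]
              have : (if h : (c:ℕ)+1 < 2*m+1 then
                  (if (c:ℕ)+1 = j then (1:ℝ) else if (c:ℕ)+1 = j+1 then -1 else 0) else 0) = 0 := by
                split_ifs <;> first | omega | rfl
              rw [this]; ring
      by_cases hjp : j % 2 = 0
      · apply rowP_of _ (j+1) (j-1)
        intro c
        rcases key c with h | ⟨h, hc⟩ | ⟨h, hc⟩
        · left; exact h
        · right; right
          rw [h, npow_odd (by omega)]
          exact ⟨rfl, by omega⟩
        · right; left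
          rw [h, npow_even hjp]
          exact ⟨rfl, hc⟩
      · apply rowP_of _ (j-1) (j+1)
        intro c
        rcases key c with h | ⟨h, hc⟩ | ⟨h, hc⟩
        · left; exact h
        · right; left
          rw [h, npow_even (by omega)]
          exact ⟨rfl, by omega⟩
        · right; right
          rw [h, npow_odd (by omega)]
          exact ⟨rfl, hc⟩

/-- every basis `B ⊆ M` of `ℝ^{2m+1}` has `|det B̂| = 1`, where the rows of
`B̂` are the vectors of `B` (enumerated injectively, in any order). -/
theorem stmt8 (m : ℕ) (σ : Fin (2*m+1) → Fin (4*m+2))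
    (hinj : Function.Injective σ)
    (hindep : LinearIndependent ℝ (fun r => nbM m (σ r)))
    (hspan : Submodule.span ℝ (Set.range fun r => nbM m (σ r)) = ⊤) :
    |(Matrix.of fun r c => nbM m (σ r) c).det| = 1 := by
  set A : Matrix (Fin (2*m+1)) (Fin (2*m+1)) ℝ := Matrix.of fun r c => nbM m (σ r) c with hAdef
  have hU : IsUnit A := Matrix.linearIndependent_rows_iff_isUnit.mp hindep
  have hdetA : A.det ≠ 0 :=
    IsUnit.ne_zero ((Matrix.isUnit_iff_isUnit_det A).mp hU)
  have hrow : ∀ r, RowP ((A * Pm m) r) := by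
    intro r
    have heq : (A * Pm m) r = fun c => Tv m (nbM m (σ r)) c := by
      funext c
      rw [Matrix.mul_apply]
      exact sum_formula m (nbM m (σ r)) c
    rw [heq]
    exact rows m (σ r)
  have hd := key _ (A * Pm m) hrow
  rw [Matrix.det_mul] at hd
  have hPm := pm_det_abs m
  have hPne : (Pm m).det ≠ 0 := by
    intro h
    rw [h] at hPm
    norm_num at hPm
  rcases hd with h | h | h
  · rcases mul_eq_zero.mp h with h' | h'
    · exact absurd h' hdetA
    · exact absurd h' hPne
  · have habs : |A.det * (Pm m).det| = 1 := by rw [h]; norm_num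
    rwa [abs_mul, hPm, mul_one] at habs
  · have habs : |A.det * (Pm m).det| = 1 := by rw [h]; norm_num
    rwa [abs_mul, hPm, mul_one] at habs
end

section
/- Let M = {f_1,...,f_{4m+2}} ⊂ R^{2m+1} be as above. If a set S ⊆ M ∖ {f_{4m+2}} contains at most one element from each triple {e_k, e_k − e_{k+1}, e_{k+1}} for k = 1,...,2m, then S is linearly independent. -/
open Finset

lemma nbM_apply (m : ℕ) (j : Fin (4*m+2)) (hj : j.val ≠ 4*m+1) (t : Fin (2*m+1)) :
    nbM m j t = if t.val = j.val/2 then 1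
      else if j.val % 2 = 1 ∧ t.val = j.val/2 + 1 then (-1:ℝ) else 0 := by
  unfold nbM
  rw [if_neg hj]
  rcases Nat.even_or_odd j.val with h | h
  · have h0 : j.val % 2 = 0 := Nat.even_iff.mp h
    rw [if_pos h0]
    by_cases ht : t.val = j.val/2 <;> simp [ht, h0]
  · have h1 : j.val % 2 = 1 := Nat.odd_iff.mp h
    rw [if_neg (by omega)]
    by_cases ht : t.val = j.val/2
    · simp [ht]
    · rw [if_neg ht, if_neg ht]
      by_cases ht2 : t.val = j.val/2 + 1 <;> simp [ht2, h1]

/-- a subset of `M ∖ {f_{4m+2}}` containing at most one element of each triple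
`{e_k, e_k - e_{k+1}, e_{k+1}}` (indices `2k, 2k+1, 2k+2`, 0-based) is linearly independent. -/
theorem stmt9 (m : ℕ) (A : Set (Fin (4*m+2)))
    (hlast : ∀ i ∈ A, i.val ≠ 4*m+1)
    (htriple : ∀ k : ℕ, k < 2*m → ∀ i ∈ A, ∀ j ∈ A,
      (i.val = 2*k ∨ i.val = 2*k+1 ∨ i.val = 2*k+2) →
      (j.val = 2*k ∨ j.val = 2*k+1 ∨ j.val = 2*k+2) → i = j) :
    LinearIndependent ℝ (fun x : A => nbM m x) := by
  haveI := Fintype.ofFinite A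
  rw [Fintype.linearIndependent_iff]
  intro g hg
  have key : ∀ n : ℕ, ∀ i : A, (i : Fin (4*m+2)).val / 2 = n → g i = 0 := by
    intro n
    induction n using Nat.strong_induction_on with
    | _ n ih =>
      intro i hi
      have hilast := hlast i i.2
      have hival := i.1.isLt
      have hk : n < 2*m+1 := by omega
      have hsum := congrFun hg ⟨n, hk⟩
      simp only [Finset.sum_apply, Pi.smul_apply, Pi.zero_apply, smul_eq_mul] at hsum
      rw [Finset.sum_eq_single i] at hsum
      · rw [nbM_apply m i.1 hilast] at hsum
        simpa [hi] using hsum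
      · intro j _ hji
        have hjlast := hlast j j.2
        have hjval := j.1.isLt
        rw [nbM_apply m j.1 hjlast]
        simp only [Fin.val_mk]
        by_cases h1 : n = j.1.val / 2
        · exfalso; apply hji
          have : j.1 = i.1 := by
            by_cases hn : n < 2*m
            · exact htriple n hn j.1 j.2 i.1 i.2 (by omega) (by omega)
            · exact Fin.ext (by omega)
          exact Subtype.ext this
        · rw [if_neg h1]
          by_cases h2 : j.1.val % 2 = 1 ∧ n = j.1.val/2 + 1
          · have hz : g j = 0 := ih (j.1.val/2) (by omega) j rfl
            simp [hz]
          · rw [if_neg (by tauto), mul_zero]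
      · intro hni; exact absurd (Finset.mem_univ i) hni
  intro i
  exact key _ i rfl
end

section
/- Let B ⊆ M = {f_1,...,f_{4m+2}} ⊂ R^{2m+1} (M as above) be a basis of R^{2m+1}. Then B can be ordered as f_{j_1},...,f_{j_{2m+1}} by the following greedy procedure, and the procedure succeeds in exhausting B: f_{j_1} is the first of e_1, e_1 − e_2, e_1 − e_2 + ⋯ + e_{2m+1} that lies in B, and given f_{j_1},...,f_{j_k}, f_{j_{k+1}} is the first of e_k − e_{k+1}, e_{k+1}, e_{k+1} − e_{k+2}, e_1 − e_2 + ⋯ + e_{2m+1} lying in B ∖ {f_{j_1},...,f_{j_k}}. -/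
open Finset

/-- The priority list (of 0-based indices into `M`) at step `r` (0-based) of the greedy
procedure: at step `0` the list `e_1, e_1-e_2, f_{4m+2}` (indices `0, 1, 4m+1`), and at step
`r ≥ 1` the list `e_r - e_{r+1}, e_{r+1}, e_{r+1} - e_{r+2}, f_{4m+2}`
(indices `2r-1, 2r, 2r+1, 4m+1`). -/
def priority (m r : ℕ) : List ℕ :=
  if r = 0 then [0, 1, 4*m+1] else [2*r-1, 2*r, 2*r+1, 4*m+1]

/-!
Indices and coordinates are 0-based, so `f_{2j} = e_j` and `f_{2j+1} = e_j - e_{j+1}`. By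
induction on the number `k` of steps: the enumeration so far contains every `f_i ∈ B` with
`i ≤ 2k - 2`, and if `f_{2k-1} ∈ B` has been passed over then `e_k` lies in the span of the
`f_i ∈ B` with `i < 2k`. A choice always exists: projecting onto the first `k + 1` coordinates
shows that `B` contains at least `k + 1` of `f_0, …, f_{2k+1}, f_{4m+1}`, and those not yet used
are candidates at step `k`. The invariant survives the step because the priority lists are
increasing, and the only way to skip some `f_i` with `i ≤ 2k` would be to pick `f_{2k-1}` over
`f_{2k} = e_k`, which linear independence forbids.
-/
theorem finrank_le_card_of_span_image_eq_top {K V W ι : Type*} [Semiring K] [StrongRankCondition K]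
    [AddCommMonoid V] [Module K V] [AddCommMonoid W] [Module K W]
    (v : ι → V) (s t : Finset ι) (hspan : Submodule.span K (v '' s) = ⊤)
    (π : V →ₗ[K] W) (hπ : Function.Surjective π) (hzero : ∀ i ∈ s, i ∉ t → π (v i) = 0) :
    Module.finrank K W ≤ t.card := by
  classical
  have htop : Submodule.span K ((t.image (π ∘ v) : Finset W) : Set W) = ⊤ := by
    rw [eq_top_iff, ← LinearMap.range_eq_top.mpr hπ, LinearMap.range_eq_map, ← hspan,
      ← Submodule.span_image, Submodule.span_le]
    rintro _ ⟨_, ⟨i, hi, rfl⟩, rfl⟩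
    by_cases hit : i ∈ t
    · exact Submodule.subset_span (Finset.mem_image_of_mem _ hit)
    · rw [hzero i hi hit]
      exact Submodule.zero_mem _
  calc Module.finrank K W = Set.finrank K ((t.image (π ∘ v) : Finset W) : Set W) := by
        rw [Set.finrank, htop, finrank_top]
    _ ≤ (t.image (π ∘ v)).card := finrank_span_finset_le_card _
    _ ≤ t.card := card_image_le

theorem List.Pairwise.le_of_idxOf_le {α : Type*} [DecidableEq α] [Preorder α] {L : List α}
    (hL : L.Pairwise (· ≤ ·)) {v w : α} (hv : v ∈ L) (hw : w ∈ L)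
    (h : L.idxOf v ≤ L.idxOf w) : v ≤ w := by
  have hv' := List.idxOf_lt_length_iff.mpr hv
  have hw' := List.idxOf_lt_length_iff.mpr hw
  rw [← List.getElem_idxOf hv', ← List.getElem_idxOf hw']
  rcases h.lt_or_eq with hlt | heq
  · exact List.pairwise_iff_getElem.mp hL _ _ hv' hw' hlt
  · simp only [heq, le_refl]

theorem List.forall_take_getElem_concat {α : Type*} {P : List α → ℕ → α → Prop} {l : List α}
    {c : α} (hl : ∀ r (hr : r < l.length), P (l.take r) r l[r]) (hc : P l l.length c) :
    ∀ r (hr : r < (l ++ [c]).length), P ((l ++ [c]).take r) r (l ++ [c])[r] := by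
  intro r hr
  rw [List.length_append, List.length_singleton] at hr
  rcases (Nat.lt_succ_iff.mp hr).lt_or_eq with hlt | rfl
  · rw [List.take_append_of_le_length hlt.le, List.getElem_append_left hlt]
    exact hl r hlt
  · rw [List.take_append_of_le_length le_rfl, List.take_length,
      List.getElem_concat_length rfl]
    exact hc

def stdVec (n k : ℕ) : Fin n → ℝ := fun τ => if τ.val = k then 1 else 0

theorem stdVec_eq_zero_of_le {n k : ℕ} (h : n ≤ k) : stdVec n k = 0 := by
  funext τ
  simp only [stdVec, Pi.zero_apply, ite_eq_right_iff, one_ne_zero, imp_false]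
  omega

section nbM

variable {m : ℕ}

theorem nbM_of_val_eq_two_mul {i : Fin (4*m+2)} {k : ℕ} (h : i.val = 2*k) :
    nbM m i = stdVec (2*m+1) k := by
  rw [nbM, if_neg (by omega), if_pos (by omega), show i.val / 2 = k by omega]
  rfl

theorem nbM_of_val_eq_two_mul_add_one {i : Fin (4*m+2)} {k : ℕ} (h : i.val = 2*k+1)
    (hk : k < 2*m) : nbM m i = stdVec (2*m+1) k - stdVec (2*m+1) (k+1) := by
  rw [nbM, if_neg (by omega), if_neg (by omega), show i.val / 2 = k by omega]
  funext τ
  simp only [stdVec, Pi.sub_apply]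
  split_ifs <;> first | omega | norm_num

theorem nbM_apply_eq_zero_of_lt {i : Fin (4*m+2)} {τ : Fin (2*m+1)} (hi : i.val ≠ 4*m+1)
    (hτ : τ.val < i.val / 2) : nbM m i τ = 0 := by
  have h₁ : τ.val ≠ i.val / 2 := by omega
  have h₂ : τ.val ≠ i.val / 2 + 1 := by omega
  rw [nbM, if_neg hi]
  split_ifs <;> simp [h₁, h₂]

end nbM

theorem mem_priority {m r v : ℕ} :
    v ∈ priority m r ↔ (2*r - 1 ≤ v ∧ v ≤ 2*r + 1) ∨ v = 4*m+1 := by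
  unfold priority
  split_ifs <;> simp only [List.mem_cons, List.not_mem_nil, or_false] <;> omega

theorem pairwise_priority {m r : ℕ} (hr : r ≤ 2*m) : (priority m r).Pairwise (· ≤ ·) := by
  unfold priority
  split_ifs <;> simp
  omega

section basis

variable {m : ℕ} {B : Finset (Fin (4*m+2))}

variable (m B) in
def spanBelow (n : ℕ) : Submodule ℝ (Fin (2*m+1) → ℝ) :=
  Submodule.span ℝ (nbM m '' {i | i ∈ B ∧ i.val < n})

theorem spanBelow_mono {n n' : ℕ} (h : n ≤ n') : spanBelow m B n ≤ spanBelow m B n' :=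
  Submodule.span_mono (Set.image_mono fun _ hi => ⟨hi.1, hi.2.trans_le h⟩)

theorem nbM_mem_spanBelow {i : Fin (4*m+2)} {n : ℕ} (hi : i ∈ B) (h : i.val < n) :
    nbM m i ∈ spanBelow m B n :=
  Submodule.subset_span ⟨i, ⟨hi, h⟩, rfl⟩

theorem nbM_notMem_spanBelow (hindep : LinearIndependent ℝ (fun i : {i // i ∈ B} => nbM m i))
    {i : Fin (4*m+2)} {n : ℕ} (hi : i ∈ B) (h : n ≤ i.val) : nbM m i ∉ spanBelow m B n := by
  have himage : nbM m '' {i | i ∈ B ∧ i.val < n}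
      = (fun j : {i // i ∈ B} => nbM m j) '' {j | j.val.val < n} := by
    ext
    constructor
    · rintro ⟨j, ⟨hjB, hjn⟩, rfl⟩
      exact ⟨⟨j, hjB⟩, hjn, rfl⟩
    · rintro ⟨j, hjn, rfl⟩
      exact ⟨j, ⟨j.2, hjn⟩, rfl⟩
  rw [spanBelow, himage]
  exact hindep.notMem_span_image (x := ⟨i, hi⟩) (by simpa using h)

theorem card_le_of_linearIndependent
    (hindep : LinearIndependent ℝ (fun i : {i // i ∈ B} => nbM m i)) : B.card ≤ 2*m+1 := by
  simpa using hindep.fintype_card_le_finrank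

/-- Projecting onto the first `k + 1` coordinates kills every `f_i` with `2k + 1 < i < 4m + 1`. -/
theorem le_card_filter_of_span_eq_top
    (hspan : Submodule.span ℝ (nbM m '' (B : Set (Fin (4*m+2)))) = ⊤) {k : ℕ} (hk : k ≤ 2*m) :
    k + 1 ≤ (B.filter fun i => i.val ≤ 2*k+1 ∨ i.val = 4*m+1).card := by
  classical
  have hle : k + 1 ≤ 2*m+1 := by omega
  have h := finrank_le_card_of_span_image_eq_top (nbM m) B
    (B.filter fun i => i.val ≤ 2*k+1 ∨ i.val = 4*m+1) hspan
    (LinearMap.funLeft ℝ ℝ (Fin.castLE hle))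
    (LinearMap.funLeft_surjective_of_injective _ _ _ (Fin.castLE_injective hle))
    (fun i hiB hi => by
      simp only [Finset.mem_filter, hiB, true_and, not_or, not_le] at hi
      funext τ
      exact nbM_apply_eq_zero_of_lt hi.2 (by simp; omega))
  simpa using h

end basis

section greedy

variable {m : ℕ} {B : Finset (Fin (4*m+2))}

variable (m B) in
def IsGreedyChoice (used : List (Fin (4*m+2))) (r : ℕ) (c : Fin (4*m+2)) : Prop :=
  c.val ∈ priority m r ∧
    ∀ v ∈ priority m r, (∃ b ∈ B, b.val = v ∧ b ∉ used) →
      (priority m r).idxOf c.val ≤ (priority m r).idxOf v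

theorem exists_isGreedyChoice {used : List (Fin (4*m+2))} {r : ℕ}
    (h : ∃ b ∈ B, b ∉ used ∧ b.val ∈ priority m r) :
    ∃ c ∈ B, c ∉ used ∧ IsGreedyChoice m B used r c := by
  classical
  obtain ⟨c, hc, hmin⟩ := Finset.exists_min_image
    (B.filter fun b => b ∉ used ∧ b.val ∈ priority m r) (fun b => (priority m r).idxOf b.val)
    (by simpa [Finset.Nonempty] using h)
  simp only [Finset.mem_filter] at hc hmin
  refine ⟨c, hc.1, hc.2.1, hc.2.2, ?_⟩
  rintro _ hv ⟨b, hb, rfl, hbu⟩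
  exact hmin b ⟨hb, hbu, hv⟩

theorem IsGreedyChoice.val_le {used : List (Fin (4*m+2))} {r : ℕ} {c b : Fin (4*m+2)}
    (hc : IsGreedyChoice m B used r c) (hr : r ≤ 2*m) (hb : b ∈ B) (hbu : b ∉ used)
    (hbr : b.val ∈ priority m r) : c.val ≤ b.val :=
  (pairwise_priority hr).le_of_idxOf_le hc.1 hbr (hc.2 _ hbr ⟨b, hb, rfl, hbu⟩)

end greedy

structure GreedyInvariant (m : ℕ) (B : Finset (Fin (4*m+2))) (k : ℕ)
    (l : List (Fin (4*m+2))) : Prop where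
  length_eq : l.length = k
  nodup : l.Nodup
  mem : ∀ x ∈ l, x ∈ B
  isGreedyChoice : ∀ r (hr : r < l.length), IsGreedyChoice m B (l.take r) r l[r]
  mem_of_val_add_two_le : ∀ i ∈ B, i.val + 2 ≤ 2*k → i ∈ l
  stdVec_mem_spanBelow : ∀ b ∈ B, b.val + 1 = 2*k → b ∉ l →
    stdVec (2*m+1) k ∈ spanBelow m B (2*k)

namespace GreedyInvariant

variable {m : ℕ} {B : Finset (Fin (4*m+2))} {k : ℕ} {l : List (Fin (4*m+2))}

theorem nil : GreedyInvariant m B 0 [] where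
  length_eq := rfl
  nodup := List.nodup_nil
  mem := by simp
  isGreedyChoice := by simp
  mem_of_val_add_two_le := by simp
  stdVec_mem_spanBelow := by simp

theorem val_lt_or_eq (h : GreedyInvariant m B k l) {x : Fin (4*m+2)} (hx : x ∈ l) :
    x.val < 2*k ∨ x.val = 4*m+1 := by
  obtain ⟨r, hr, rfl⟩ := List.mem_iff_getElem.mp hx
  have := mem_priority.mp (h.isGreedyChoice r hr).1
  have := h.length_eq
  omega

theorem exists_available (h : GreedyInvariant m B k l)
    (hspan : Submodule.span ℝ (nbM m '' (B : Set (Fin (4*m+2)))) = ⊤) (hk : k ≤ 2*m) :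
    ∃ b ∈ B, b ∉ l ∧ b.val ∈ priority m k := by
  classical
  have hsub : l.toFinset ⊆ B.filter fun i => i.val ≤ 2*k+1 ∨ i.val = 4*m+1 := by
    intro x hx
    rw [List.mem_toFinset] at hx
    have := h.val_lt_or_eq hx
    exact Finset.mem_filter.mpr ⟨h.mem x hx, by omega⟩
  have hcard : l.toFinset.card < (B.filter fun i => i.val ≤ 2*k+1 ∨ i.val = 4*m+1).card := by
    rw [List.toFinset_card_of_nodup h.nodup, h.length_eq]
    exact le_card_filter_of_span_eq_top hspan hk
  obtain ⟨b, hbS, hbl⟩ := Finset.exists_mem_notMem_of_card_lt_card hcard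
  rw [List.mem_toFinset] at hbl
  rw [Finset.mem_filter] at hbS
  have hbk : ¬ b.val + 2 ≤ 2*k := fun hb => hbl (h.mem_of_val_add_two_le b hbS.1 hb)
  exact ⟨b, hbS.1, hbl, mem_priority.mpr (by omega)⟩

theorem mem_of_val_add_two_le_snoc {c : Fin (4*m+2)} (h : GreedyInvariant m B k l)
    (hk : k ≤ 2*m) (hcB : c ∈ B) (hcl : c ∉ l) (hc : IsGreedyChoice m B l k c)
    (hindep : LinearIndependent ℝ (fun i : {i // i ∈ B} => nbM m i)) :
    ∀ i ∈ B, i.val + 2 ≤ 2*(k+1) → i ∈ l ++ [c] := by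
  intro i hi hik
  by_contra hnot
  simp only [List.mem_append, List.mem_singleton, not_or] at hnot
  have hil : 2*k ≤ i.val + 1 := by
    by_contra
    exact hnot.1 (h.mem_of_val_add_two_le i hi (by omega))
  have hci := hc.val_le hk hi hnot.1 (mem_priority.mpr (by omega))
  have hcp := mem_priority.mp hc.1
  have hne : c.val ≠ i.val := Fin.val_ne_of_ne (Ne.symm hnot.2)
  have hiv : i.val = 2*k := by omega
  have hspan := h.stdVec_mem_spanBelow c hcB (by omega) hcl
  rw [← nbM_of_val_eq_two_mul hiv] at hspan
  exact nbM_notMem_spanBelow hindep hi hiv.ge hspan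

theorem stdVec_mem_spanBelow_snoc {c : Fin (4*m+2)} (h : GreedyInvariant m B k l)
    (hk : k ≤ 2*m) (hcB : c ∈ B) (hcl : c ∉ l) (hc : IsGreedyChoice m B l k c) :
    ∀ b ∈ B, b.val + 1 = 2*(k+1) → b ∉ l ++ [c] →
      stdVec (2*m+1) (k+1) ∈ spanBelow m B (2*(k+1)) := by
  intro b hb hbv hbl
  rcases hk.lt_or_eq with hk | rfl
  · simp only [List.mem_append, List.mem_singleton, not_or] at hbl
    have hcb := hc.val_le hk.le hb hbl.1 (mem_priority.mpr (by omega))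
    have hcp := mem_priority.mp hc.1
    have hne : c.val ≠ b.val := Fin.val_ne_of_ne (Ne.symm hbl.2)
    have hstd : stdVec (2*m+1) k ∈ spanBelow m B (2*(k+1)) := by
      rcases (by omega : c.val = 2*k ∨ c.val + 1 = 2*k) with hcv | hcv
      · rw [← nbM_of_val_eq_two_mul hcv]
        exact nbM_mem_spanBelow hcB (by omega)
      · exact spanBelow_mono (by omega) (h.stdVec_mem_spanBelow c hcB hcv hcl)
    have hsub : stdVec (2*m+1) (k+1) = stdVec (2*m+1) k - nbM m b := by
      rw [nbM_of_val_eq_two_mul_add_one (by omega) hk, sub_sub_cancel]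
    rw [hsub]
    exact Submodule.sub_mem _ hstd (nbM_mem_spanBelow hb (by omega))
  · rw [stdVec_eq_zero_of_le le_rfl]
    exact Submodule.zero_mem _

theorem exists_snoc (h : GreedyInvariant m B k l)
    (hindep : LinearIndependent ℝ (fun i : {i // i ∈ B} => nbM m i))
    (hspan : Submodule.span ℝ (nbM m '' (B : Set (Fin (4*m+2)))) = ⊤) (hk : k ≤ 2*m) :
    ∃ c, GreedyInvariant m B (k+1) (l ++ [c]) := by
  obtain ⟨c, hcB, hcl, hc⟩ := exists_isGreedyChoice (h.exists_available hspan hk)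
  refine ⟨c, ⟨?_, ?_, ?_, ?_, ?_, ?_⟩⟩
  · simp [h.length_eq]
  · exact h.nodup.append (List.nodup_singleton c) (by simpa using hcl)
  · simpa [or_imp, forall_and] using ⟨h.mem, hcB⟩
  · exact List.forall_take_getElem_concat h.isGreedyChoice (h.length_eq ▸ hc)
  · exact h.mem_of_val_add_two_le_snoc hk hcB hcl hc hindep
  · exact h.stdVec_mem_spanBelow_snoc hk hcB hcl hc

theorem exists_of_le (hindep : LinearIndependent ℝ (fun i : {i // i ∈ B} => nbM m i))
    (hspan : Submodule.span ℝ (nbM m '' (B : Set (Fin (4*m+2)))) = ⊤) :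
    ∀ k ≤ 2*m+1, ∃ l, GreedyInvariant m B k l
  | 0, _ => ⟨[], nil⟩
  | k + 1, hk => by
    obtain ⟨l, h⟩ := exists_of_le hindep hspan k (by omega)
    obtain ⟨c, hc⟩ := h.exists_snoc hindep hspan (by omega)
    exact ⟨l ++ [c], hc⟩

theorem mem_of_mem_basis (h : GreedyInvariant m B (2*m+1) l)
    (hindep : LinearIndependent ℝ (fun i : {i // i ∈ B} => nbM m i)) {b : Fin (4*m+2)}
    (hb : b ∈ B) : b ∈ l := by
  classical
  have hlB : l.toFinset = B := Finset.eq_of_subset_of_card_le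
    (fun x hx => h.mem x (List.mem_toFinset.mp hx))
    (by rw [List.toFinset_card_of_nodup h.nodup, h.length_eq]
        exact card_le_of_linearIndependent hindep)
  rw [← hlB] at hb
  exact List.mem_toFinset.mp hb

end GreedyInvariant

/-- the greedy enumeration procedure succeeds in exhausting any basis
`B ⊆ M` of `ℝ^{2m+1}`. -/
theorem stmt14 (m : ℕ) (B : Finset (Fin (4*m+2)))
    (hindep : LinearIndependent ℝ (fun i : {i // i ∈ B} => nbM m i))
    (hspan : Submodule.span ℝ (nbM m '' (B : Set (Fin (4*m+2)))) = ⊤) :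
    ∃ g : Fin (2*m+1) → Fin (4*m+2),
      Function.Injective g ∧
      (∀ r, g r ∈ B) ∧ (∀ b ∈ B, ∃ r, g r = b) ∧
      ∀ r : Fin (2*m+1),
        (g r).val ∈ priority m r.val ∧
        ∀ v ∈ priority m r.val,
          (∃ b ∈ B, b.val = v ∧ ∀ r' : Fin (2*m+1), r' < r → g r' ≠ b) →
          List.idxOf (g r).val (priority m r.val) ≤ List.idxOf v (priority m r.val) := by
  obtain ⟨l, h⟩ := GreedyInvariant.exists_of_le hindep hspan (2*m+1) le_rfl
  have hlen := h.length_eq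
  refine ⟨fun r => l[r.val], fun r r' hrr => Fin.ext (h.nodup.getElem_inj_iff.mp hrr),
    fun r => h.mem _ (List.getElem_mem _), fun b hb => ?_, fun r => ?_⟩
  · obtain ⟨r, hr, rfl⟩ := List.mem_iff_getElem.mp (h.mem_of_mem_basis hindep hb)
    exact ⟨⟨r, by omega⟩, rfl⟩
  · obtain ⟨hmem, hmin⟩ := h.isGreedyChoice r (by omega)
    refine ⟨hmem, fun v hv ⟨b, hb, hbv, hbr⟩ => hmin v hv ⟨b, hb, hbv, ?_⟩⟩
    rw [List.mem_take_iff_getElem]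
    rintro ⟨j, hj, rfl⟩
    exact hbr ⟨j, by omega⟩ (Fin.mk_lt_mk.mpr (by omega)) rfl
end

section
/- Let M = {f_1,...,f_{4m+2}} ⊂ R^{2m+1} be as above. The point θ* = (1/2, 1/2, ..., 1/2, 1/2) ∈ R^{4m+2} with all coordinates 1/2 satisfies: Σ_i θ*_i = 2m+1 and Σ_{f_i ∈ S} θ*_i ≤ rank(S) for every S ⊆ M; i.e., θ* lies in the matroid polytope of M. -/
open Finset

def Efam (m : ℕ) : Fin (2*m+1) → Fin (2*m+1) → ℝ :=
  fun j t => if t.val = j.val then 1 else 0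

def Dfam (m : ℕ) : Fin (2*m+1) → Fin (2*m+1) → ℝ :=
  fun j t => if j.val = 2*m then (-1:ℝ)^(t:ℕ)
    else if t.val = j.val then 1 else if t.val = j.val + 1 then -1 else 0

def Ffam (m : ℕ) : Fin (2*m+1) → Fin (2*m+1) → ℝ :=
  fun j t => if j.val = 2*m then (if Even t.val then 1 else 0)
    else if t.val = j.val then 1 else 0

def Phi (n : ℕ) : (Fin n → ℝ) →ₗ[ℝ] (Fin n → ℝ) where
  toFun x := fun t => ∑ s, if s.val ≤ t.val then x s else 0
  map_add' x y := by
    funext t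
    simp only [Pi.add_apply]
    rw [← Finset.sum_add_distrib]
    exact Finset.sum_congr rfl fun s _ => by by_cases h : s.val ≤ t.val <;> simp [h]
  map_smul' c x := by
    funext t
    simp only [RingHom.id_apply, Pi.smul_apply, smul_eq_mul, Finset.mul_sum]
    exact Finset.sum_congr rfl fun s _ => by by_cases h : s.val ≤ t.val <;> simp [h]

lemma indE (m : ℕ) : LinearIndependent ℝ (Efam m) := by
  rw [Fintype.linearIndependent_iff]
  intro g hg i
  have h := congrFun hg i
  simp only [Finset.sum_apply, Pi.smul_apply, smul_eq_mul, Pi.zero_apply] at h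
  have e : ∀ j : Fin (2*m+1), g j * Efam m j i = if j = i then g j else 0 := by
    intro j
    by_cases hji : j = i
    · subst hji; simp [Efam]
    · have : ¬ i.val = j.val := fun hc => hji (Fin.ext hc.symm)
      simp [Efam, this, hji]
  rw [Finset.sum_congr rfl (fun j _ => e j), Finset.sum_ite_eq'] at h
  simpa using h

lemma indF (m : ℕ) : LinearIndependent ℝ (Ffam m) := by
  rw [Fintype.linearIndependent_iff]
  intro g hg
  have hcoord : ∀ t : Fin (2*m+1), ∑ j, g j * Ffam m j t = 0 := by
    intro t
    have h := congrFun hg t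
    simpa only [Finset.sum_apply, Pi.smul_apply, smul_eq_mul, Pi.zero_apply] using h
  have hlast : g ⟨2*m, by omega⟩ = 0 := by
    have h := hcoord ⟨2*m, by omega⟩
    have e : ∀ j : Fin (2*m+1), g j * Ffam m j ⟨2*m, by omega⟩
        = if j = ⟨2*m, by omega⟩ then g j else 0 := by
      intro j
      by_cases hj : j.val = 2*m
      · have hje : j = ⟨2*m, by omega⟩ := Fin.ext hj
        simp [Ffam, hj, hje, Nat.even_iff]
      · have hne : j ≠ ⟨2*m, by omega⟩ := fun hc => hj (by rw [hc])
        have : ¬ (2*m = j.val) := fun hc => hj hc.symm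
        simp [Ffam, hj, hne, this]
    rw [Finset.sum_congr rfl (fun j _ => e j), Finset.sum_ite_eq'] at h
    simpa using h
  intro i
  by_cases hi : i.val = 2*m
  · have : i = ⟨2*m, by omega⟩ := Fin.ext hi
    rw [this]; exact hlast
  · have h := hcoord i
    have e : ∀ j : Fin (2*m+1), g j * Ffam m j i = if j = i then g j else 0 := by
      intro j
      by_cases hj : j.val = 2*m
      · have hje : j = ⟨2*m, by omega⟩ := Fin.ext hj
        have hne : j ≠ i := fun hc => hi (by rw [← hc, hj])
        rw [hje, hlast]; simp
      · by_cases hji : j = i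
        · subst hji; simp [Ffam, hj]
        · have : ¬ i.val = j.val := fun hc => hji (Fin.ext hc.symm)
          simp [Ffam, hj, this, hji]
    rw [Finset.sum_congr rfl (fun j _ => e j), Finset.sum_ite_eq'] at h
    simpa using h

lemma phiD (m : ℕ) (j : Fin (2*m+1)) : Phi (2*m+1) (Dfam m j) = Ffam m j := by
  funext t
  show (∑ s : Fin (2*m+1), if s.val ≤ t.val then Dfam m j s else 0) = Ffam m j t
  by_cases hj : j.val = 2*m
  · have e : ∀ s : Fin (2*m+1), (if s.val ≤ t.val then Dfam m j s else 0)
        = (fun k : ℕ => if k ≤ t.val then (-1:ℝ)^k else 0) s.val := by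
      intro s; simp [Dfam, hj]
    rw [Finset.sum_congr rfl (fun s _ => e s),
      Fin.sum_univ_eq_sum_range (fun k : ℕ => if k ≤ t.val then (-1:ℝ)^k else 0),
      ← Finset.sum_filter]
    have hf : (Finset.range (2*m+1)).filter (fun s => s ≤ t.val) = Finset.range (t.val+1) := by
      ext s
      have := t.isLt
      simp only [Finset.mem_filter, Finset.mem_range]
      omega
    rw [hf, neg_one_geom_sum]
    rcases Nat.even_or_odd t.val with he | ho
    · simp [Ffam, hj, he, Nat.even_add_one, Nat.not_even_iff_odd, Even.add_one he]
    · simp [Ffam, hj, Nat.even_add_one, Nat.not_even_iff_odd.mpr ho, ho.add_one]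
  · have hjlt : j.val < 2*m := by have := j.isLt; omega
    set j1 : Fin (2*m+1) := (⟨j.val+1, by omega⟩ : Fin (2*m+1)) with hj1
    have hj1v : j1.val = j.val + 1 := rfl
    have e : ∀ s : Fin (2*m+1), (if s.val ≤ t.val then Dfam m j s else 0)
        = (if s = j then (if j.val ≤ t.val then (1:ℝ) else 0) else 0)
          + (if s = j1 then (if j.val+1 ≤ t.val then (-1:ℝ) else 0) else 0) := by
      intro s
      have hne : j ≠ j1 := fun hc => by
        have := congrArg Fin.val hc; rw [hj1v] at this; omega
      by_cases h1 : s.val = j.val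
      · have hs : s = j := Fin.ext h1
        have hs1 : s ≠ j1 := fun hc => hne (hs ▸ hc)
        have hD : Dfam m j s = 1 := by simp [Dfam, hj, h1]
        rw [if_pos hs, if_neg hs1, add_zero]
        by_cases h2 : s.val ≤ t.val
        · rw [if_pos h2, hD, if_pos (h1 ▸ h2)]
        · rw [if_neg h2, if_neg (by omega : ¬ j.val ≤ t.val)]
      · by_cases h2 : s.val = j.val + 1
        · have hs1 : s = j1 := Fin.ext (by rw [hj1v]; exact h2)
          have hsj : s ≠ j := fun hc => h1 (congrArg Fin.val hc)
          have hD : Dfam m j s = -1 := by simp [Dfam, hj, h1, h2]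
          rw [if_neg hsj, if_pos hs1, zero_add]
          by_cases h3 : s.val ≤ t.val
          · rw [if_pos h3, hD, if_pos (by omega)]
          · rw [if_neg h3, if_neg (by omega)]
        · have hsj : s ≠ j := fun hc => h1 (congrArg Fin.val hc)
          have hs1 : s ≠ j1 := fun hc => h2 (by rw [← hj1v]; exact congrArg Fin.val hc)
          have hD : Dfam m j s = 0 := by simp [Dfam, hj, h1, h2]
          rw [if_neg hsj, if_neg hs1]
          by_cases h3 : s.val ≤ t.val <;> simp [h3, hD]
    rw [Finset.sum_congr rfl (fun s _ => e s), Finset.sum_add_distrib,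
      Finset.sum_ite_eq' Finset.univ j, Finset.sum_ite_eq' Finset.univ j1]
    simp only [Finset.mem_univ, if_true]
    by_cases h1 : j.val ≤ t.val
    · by_cases h2 : j.val + 1 ≤ t.val
      · have h3 : ¬ t.val = j.val := by omega
        simp [Ffam, hj, h1, h2, h3]
      · have h3 : t.val = j.val := by omega
        simp [Ffam, hj, h1, h2, h3]
    · have h2 : ¬ j.val + 1 ≤ t.val := by omega
      have h3 : ¬ t.val = j.val := by omega
      simp [Ffam, hj, h1, h2, h3]

lemma indD (m : ℕ) : LinearIndependent ℝ (Dfam m) := by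
  have hcomp : (Phi (2*m+1)) ∘ (Dfam m) = Ffam m := funext fun j => phiD m j
  exact LinearIndependent.of_comp (Phi (2*m+1)) (hcomp ▸ indF m)

lemma nbM_even (m : ℕ) {i : Fin (4*m+2)} (h : i.val % 2 = 0) :
    nbM m i = Efam m ⟨i.val/2, by have := i.isLt; omega⟩ := by
  have h1 : i.val ≠ 4*m+1 := by omega
  funext t; simp [nbM, Efam, h1, h]

lemma nbM_odd (m : ℕ) {i : Fin (4*m+2)} (h : i.val % 2 = 1) :
    nbM m i = Dfam m ⟨i.val/2, by have := i.isLt; omega⟩ := by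
  by_cases h1 : i.val = 4*m+1
  · have h2 : i.val/2 = 2*m := by omega
    have h4 : (4*m+1)/2 = 2*m := by omega
    funext t; simp [nbM, Dfam, h1, h2, h4]
  · have hlt := i.isLt
    have h2 : ¬ i.val % 2 = 0 := by omega
    have h3 : ¬ i.val / 2 = 2*m := by omega
    funext t; simp [nbM, Dfam, h1, h2, h3]

lemma card_le_rank (m : ℕ) (W : Fin (2*m+1) → Fin (2*m+1) → ℝ)
    (hW : LinearIndependent ℝ W)
    (S T : Finset (Fin (4*m+2))) (hTS : T ⊆ S)
    (hrep : ∀ i ∈ T, nbM m i = W ⟨i.val/2, by have := i.isLt; omega⟩)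
    (hinj : ∀ i ∈ T, ∀ i' ∈ T, i.val/2 = i'.val/2 → i = i') :
    T.card ≤ Module.finrank ℝ (Submodule.span ℝ (nbM m '' (S : Set (Fin (4*m+2))))) := by
  classical
  set p := Submodule.span ℝ (nbM m '' (S : Set (Fin (4*m+2)))) with hp
  haveI : FiniteDimensional ℝ p :=
    FiniteDimensional.span_of_finite ℝ ((S.finite_toSet).image _)
  have hmem : ∀ i : {x // x ∈ T}, nbM m i.val ∈ p :=
    fun i => Submodule.subset_span ⟨i.val, hTS i.2, rfl⟩
  set v : {x // x ∈ T} → p := fun i => ⟨nbM m i.val, hmem i⟩ with hv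
  have hvind : LinearIndependent ℝ v := by
    apply LinearIndependent.of_comp p.subtype
    have hcomp : (p.subtype) ∘ v
        = (W ∘ fun i : {x // x ∈ T} => (⟨i.val.val/2, by have := i.val.isLt; omega⟩ : Fin (2*m+1))) := by
      funext i
      exact hrep i.val i.2
    rw [hcomp]
    apply hW.comp
    intro a b hab
    have : a.val.val/2 = b.val.val/2 := by
      have := congrArg Fin.val hab; simpa using this
    exact Subtype.ext (hinj a.val a.2 b.val b.2 this)
  have := hvind.fintype_card_le_finrank
  simpa [Fintype.card_coe] using this

/-- the point `θ* = (1/2, …, 1/2)` lies in the matroid polytope of `M`. -/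
theorem stmt18 (m : ℕ) :
    (∑ _i : Fin (4*m+2), (1/2 : ℝ)) = 2*m+1 ∧
    ∀ S : Finset (Fin (4*m+2)),
      (∑ _i ∈ S, (1/2 : ℝ)) ≤
        (Module.finrank ℝ (Submodule.span ℝ (nbM m '' (S : Set (Fin (4*m+2))))) : ℝ) := by
  classical
  constructor
  · rw [Finset.sum_const, Finset.card_univ, Fintype.card_fin, nsmul_eq_mul]
    push_cast; ring
  · intro S
    set r := Module.finrank ℝ (Submodule.span ℝ (nbM m '' (S : Set (Fin (4*m+2))))) with hr
    set Se := S.filter (fun i => i.val % 2 = 0) with hSe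
    set So := S.filter (fun i => i.val % 2 = 1) with hSo
    have he : Se.card ≤ r := by
      apply card_le_rank m (Efam m) (indE m) S Se (Finset.filter_subset _ _)
      · intro i hi
        exact nbM_even m ((Finset.mem_filter.mp hi).2)
      · intro i hi i' hi' hdiv
        have h1 := (Finset.mem_filter.mp hi).2
        have h2 := (Finset.mem_filter.mp hi').2
        exact Fin.ext (by omega)
    have ho : So.card ≤ r := by
      apply card_le_rank m (Dfam m) (indD m) S So (Finset.filter_subset _ _)
      · intro i hi
        exact nbM_odd m ((Finset.mem_filter.mp hi).2)
      · intro i hi i' hi' hdiv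
        have h1 := (Finset.mem_filter.mp hi).2
        have h2 := (Finset.mem_filter.mp hi').2
        exact Fin.ext (by omega)
    have hsplit : Se.card + So.card = S.card := by
      have h5 : So = S.filter (fun i => ¬ (i.val % 2 = 0)) := by
        rw [hSo]
        apply Finset.filter_congr
        intro i _
        omega
      rw [hSe, h5]
      exact Finset.card_filter_add_card_filter_not _
    have hcard : S.card ≤ 2 * r := by omega
    rw [Finset.sum_const, nsmul_eq_mul]
    have : (S.card : ℝ) ≤ 2 * r := by exact_mod_cast hcard
    linarith
end
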